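/- arXiv:1711.07030 — 7 statements merged into one kernel-verified Lean document; each statement's English description precedes it below -/
import Mathlib

section
/- Let 𝔽 be an ordered field. Any two normal systems of the same cardinality n in the plane 𝔽^2 are isomorphic: given two sets {±v_1, …, ±v_n} and {±w_1, …, ±w_n} of antipodal pairs of nonzero vectors in 𝔽^2 lying on n distinct lines through the origin (respectively), there exists a convex positive bijection between them. -/
/-! A plane vector is a positive combination of a basis `u₁, u₂` exactly when two products of
`2 × 2` determinants are positive (Cramer's rule), so a relabelling of the antipodal pairs that
preserves the signs of all determinants is a convex positive bijection. To build one, flip each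
vector into the upper half-plane and sort both families by angle: matching the `k`-th line of one
system with the `k`-th line of the other preserves these signs, because for upper vectors
`det (a, b) > 0` says precisely that `b` has the larger angle. -/

/-- `(σ, η)` encodes a convex positive bijection `δ` between the sets of antipodal pairs
`𝒰₁ = {± v i}` and `𝒰₂ = {± w i}`, namely `δ (ζ • v i) = (ζ * η i) • w (σ i)` for signs
`ζ = ±1` (so that `δ (-u) = -δ u`): for every basis `{ζ i • v i : i ∈ T}` of `F^m`
contained in `𝒰₁` and every element `ξ • v k` of `𝒰₁`, the element is a positive linear
combination of the basis if and only if its image under `δ` is a positive linear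
combination of the image of the basis. -/
def IsCPB {F : Type*} [Field F] [LinearOrder F] [IsStrictOrderedRing F] {m n : ℕ}
    (v w : Fin n → Fin m → F) (σ : Equiv.Perm (Fin n)) (η : Fin n → F) : Prop :=
  (∀ i, η i = 1 ∨ η i = -1) ∧
  ∀ T : Finset (Fin n), T.card = m →
    ∀ ζ : Fin n → F, (∀ i, ζ i = 1 ∨ ζ i = -1) →
      LinearIndependent F (fun i : {x // x ∈ T} => ζ i.1 • v i.1) →
      ∀ (k : Fin n) (ξ : F), ξ = 1 ∨ ξ = -1 →
        ((∃ c : Fin n → F, (∀ i ∈ T, 0 < c i) ∧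
            ξ • v k = ∑ i ∈ T, c i • (ζ i • v i)) ↔
          (∃ c : Fin n → F, (∀ i ∈ T, 0 < c i) ∧
            (ξ * η k) • w (σ k) = ∑ i ∈ T, c i • ((ζ i * η i) • w (σ i))))

open SignType (sign)

theorem exists_pos_sum_pair_iff {R M ι : Type*} [Semiring R] [PartialOrder R] [AddCommMonoid M]
    [Module R M] [DecidableEq ι] {i j : ι} (hij : i ≠ j) (g : ι → M) (x : M) :
    (∃ c : ι → R, (∀ t ∈ ({i, j} : Finset ι), 0 < c t) ∧ x = ∑ t ∈ {i, j}, c t • g t) ↔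
      ∃ c₁ c₂ : R, 0 < c₁ ∧ 0 < c₂ ∧ x = c₁ • g i + c₂ • g j := by
  simp only [Finset.sum_pair hij, Finset.mem_insert, Finset.mem_singleton, forall_eq_or_imp,
    forall_eq]
  constructor
  · rintro ⟨c, ⟨hi, hj⟩, hx⟩
    exact ⟨c i, c j, hi, hj, hx⟩
  · rintro ⟨c₁, c₂, h₁, h₂, hx⟩
    refine ⟨fun t => if t = i then c₁ else c₂, ⟨by simpa, by simpa [hij.symm]⟩, ?_⟩
    simpa [hij.symm] using hx

theorem exists_perm_lt_iff_lt {α β : Type*} [LinearOrder α] [LinearOrder β] {n : ℕ}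
    {f : Fin n → α} {g : Fin n → β} (hf : Function.Injective f) (hg : Function.Injective g) :
    ∃ σ : Equiv.Perm (Fin n), ∀ i j, f i < f j ↔ g (σ i) < g (σ j) := by
  have hfs : StrictMono (f ∘ Tuple.sort f) :=
    (Tuple.monotone_sort f).strictMono_of_injective (hf.comp (Tuple.sort f).injective)
  have hgs : StrictMono (g ∘ Tuple.sort g) :=
    (Tuple.monotone_sort g).strictMono_of_injective (hg.comp (Tuple.sort g).injective)
  refine ⟨(Tuple.sort f).symm.trans (Tuple.sort g), fun i j => ?_⟩
  calc f i < f j ↔ (f ∘ Tuple.sort f) ((Tuple.sort f).symm i) <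
        (f ∘ Tuple.sort f) ((Tuple.sort f).symm j) := by simp
    _ ↔ _ := hfs.lt_iff_lt
    _ ↔ _ := hgs.lt_iff_lt.symm

theorem sign_eq_sign_of_pos_iff_of_neg_iff {α : Type*} [Zero α] [LinearOrder α] {a b : α}
    (hpos : 0 < a ↔ 0 < b) (hneg : a < 0 ↔ b < 0) : sign a = sign b := by
  rcases lt_trichotomy a 0 with ha | ha | ha <;> rcases lt_trichotomy b 0 with hb | hb | hb <;>
    simp_all [sign_neg, sign_pos]

theorem pos_mul_iff_of_sign_eq {R : Type*} [Ring R] [LinearOrder R] [IsStrictOrderedRing R]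
    {a b c d : R} (hac : sign a = sign c) (hbd : sign b = sign d) : 0 < a * b ↔ 0 < c * d := by
  rw [← sign_eq_one_iff, ← sign_eq_one_iff, sign_mul, sign_mul, hac, hbd]

section CommRing

variable {R : Type*} [CommRing R]

def det2 (x y : Fin 2 → R) : R := x 0 * y 1 - x 1 * y 0

theorem det2_swap (x y : Fin 2 → R) : det2 y x = -det2 x y := by
  simp only [det2]; ring

theorem det2_smul_smul (s t : R) (x y : Fin 2 → R) :
    det2 (s • x) (t • y) = s * t * det2 x y := by
  simp only [det2, Pi.smul_apply, smul_eq_mul]; ring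

theorem det2_smul_smul_ne_zero [NoZeroDivisors R] {s t : R} {x y : Fin 2 → R} (hs : s ≠ 0)
    (ht : t ≠ 0) (h : det2 x y ≠ 0) : det2 (s • x) (t • y) ≠ 0 := by
  rw [det2_smul_smul]
  exact mul_ne_zero (mul_ne_zero hs ht) h

theorem det2_smul_eq (u₁ u₂ x : Fin 2 → R) :
    det2 u₁ u₂ • x = det2 x u₂ • u₁ + det2 u₁ x • u₂ := by
  funext t; fin_cases t <;> simp [det2] <;> ring

end CommRing

section Field

variable {K : Type*} [Field K]

theorem mem_span_singleton_of_det2_eq_zero {x y : Fin 2 → K} (hx : x ≠ 0)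
    (h : det2 x y = 0) : y ∈ Submodule.span K {x} := by
  obtain ⟨k, hk⟩ := Function.ne_iff.mp hx
  refine Submodule.mem_span_singleton.mpr ⟨y k / x k, funext fun t => ?_⟩
  simp only [det2] at h
  fin_cases k <;> fin_cases t <;> simp at hk ⊢ <;> field_simp
  exacts [by linear_combination -h, by linear_combination h]

theorem det2_ne_zero_of_span_ne {x y : Fin 2 → K} (hx : x ≠ 0) (hy : y ≠ 0)
    (h : Submodule.span K {x} ≠ Submodule.span K {y}) : det2 x y ≠ 0 := by
  refine fun h0 => h (le_antisymm ?_ ?_) <;> rw [Submodule.span_singleton_le_iff_mem]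
  · exact mem_span_singleton_of_det2_eq_zero hy (by rw [det2_swap, h0, neg_zero])
  · exact mem_span_singleton_of_det2_eq_zero hx h0

end Field

section OrderedField

variable {F : Type*} [Field F] [LinearOrder F] [IsStrictOrderedRing F]

theorem sign_det2_smul_smul (s t : F) (x y : Fin 2 → F) :
    sign (det2 (s • x) (t • y)) = sign (s * t) * sign (det2 x y) := by
  rw [det2_smul_smul, sign_mul]

theorem exists_pos_smul_add_smul_iff {u₁ u₂ : Fin 2 → F} (hd : det2 u₁ u₂ ≠ 0) (x : Fin 2 → F) :
    (∃ c₁ c₂ : F, 0 < c₁ ∧ 0 < c₂ ∧ x = c₁ • u₁ + c₂ • u₂) ↔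
      0 < det2 u₁ u₂ * det2 x u₂ ∧ 0 < det2 u₁ u₂ * det2 u₁ x := by
  constructor
  · rintro ⟨c₁, c₂, hc₁, hc₂, rfl⟩
    have e₁ : det2 (c₁ • u₁ + c₂ • u₂) u₂ = c₁ * det2 u₁ u₂ := by simp [det2]; ring
    have e₂ : det2 u₁ (c₁ • u₁ + c₂ • u₂) = c₂ * det2 u₁ u₂ := by simp [det2]; ring
    have hsq : 0 < det2 u₁ u₂ * det2 u₁ u₂ := mul_self_pos.mpr hd
    rw [e₁, e₂]
    constructor <;> nlinarith
  · rintro ⟨h₁, h₂⟩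
    refine ⟨det2 x u₂ / det2 u₁ u₂, det2 u₁ x / det2 u₁ u₂,
      div_pos_iff.mpr (mul_pos_iff.mp (mul_comm (det2 u₁ u₂) _ ▸ h₁)),
      div_pos_iff.mpr (mul_pos_iff.mp (mul_comm (det2 u₁ u₂) _ ▸ h₂)), ?_⟩
    rw [div_eq_inv_mul, div_eq_inv_mul, mul_smul, mul_smul, ← smul_add, ← det2_smul_eq,
      inv_smul_smul₀ hd]

theorem isCPB_of_sign_det2_eq {n : ℕ} {v w : Fin n → Fin 2 → F} {σ : Equiv.Perm (Fin n)}
    {η : Fin n → F} (hη : ∀ i, η i = 1 ∨ η i = -1)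
    (hv : Pairwise fun i j => det2 (v i) (v j) ≠ 0)
    (h : ∀ i j, sign (det2 (v i) (v j)) = sign (det2 (η i • w (σ i)) (η j • w (σ j)))) :
    IsCPB v w σ η := by
  have hsmul : ∀ i j (s t : F), sign (det2 (s • v i) (t • v j)) =
      sign (det2 ((s * η i) • w (σ i)) ((t * η j) • w (σ j))) := fun i j s t => by
    rw [mul_smul, mul_smul, sign_det2_smul_smul, sign_det2_smul_smul, h]
  refine ⟨hη, fun T hT ζ hζ _ k ξ _ => ?_⟩
  obtain ⟨i, j, hij, rfl⟩ := Finset.card_eq_two.mp hT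
  have hζ0 : ∀ t, ζ t ≠ 0 := fun t => by rcases hζ t with h | h <;> simp [h]
  have hd : det2 (ζ i • v i) (ζ j • v j) ≠ 0 := det2_smul_smul_ne_zero (hζ0 i) (hζ0 j) (hv hij)
  have hd' : det2 ((ζ i * η i) • w (σ i)) ((ζ j * η j) • w (σ j)) ≠ 0 := by
    rwa [← sign_ne_zero, ← hsmul, sign_ne_zero]
  rw [exists_pos_sum_pair_iff hij, exists_pos_sum_pair_iff hij,
    exists_pos_smul_add_smul_iff hd, exists_pos_smul_add_smul_iff hd',
    pos_mul_iff_of_sign_eq (hsmul i j _ _) (hsmul k j _ _),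
    pos_mul_iff_of_sign_eq (hsmul i j _ _) (hsmul i k _ _)]

def IsUpper (x : Fin 2 → F) : Prop :=
  0 < x 1 ∨ (x 1 = 0 ∧ 0 < x 0)

theorem exists_sign_isUpper {x : Fin 2 → F} (hx : x ≠ 0) :
    ∃ s : F, (s = 1 ∨ s = -1) ∧ IsUpper (s • x) := by
  by_cases h : IsUpper x
  · exact ⟨1, Or.inl rfl, by simpa using h⟩
  refine ⟨-1, Or.inr rfl, ?_⟩
  simp only [IsUpper, not_or, not_and, not_lt] at h
  simp only [IsUpper, neg_smul, one_smul, Pi.neg_apply, neg_pos, neg_eq_zero]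
  rcases h.1.lt_or_eq with h1 | h1
  · exact Or.inl h1
  · refine Or.inr ⟨h1, (h.2 h1).lt_of_ne fun h0 => hx ?_⟩
    funext t; fin_cases t <;> simp [h0, h1]

/-- For `x` in the upper half-plane at angle `θ ∈ [0, π)` this is `-cot θ` (and `⊥` at `θ = 0`),
an increasing function of `θ`. -/
noncomputable def angleKey (x : Fin 2 → F) : WithBot F :=
  if x 1 = 0 then ⊥ else ↑(-(x 0 / x 1))

theorem angleKey_lt_iff {a b : Fin 2 → F} (ha : IsUpper a) (hb : IsUpper b) :
    angleKey a < angleKey b ↔ 0 < det2 a b := by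
  rcases ha with ha1 | ⟨ha1, ha0⟩ <;> rcases hb with hb1 | ⟨hb1, hb0⟩
  · simp only [angleKey, det2, ha1.ne', hb1.ne', if_false, WithBot.coe_lt_coe, neg_lt_neg_iff,
      div_lt_div_iff₀ hb1 ha1]
    constructor <;> intro h <;> nlinarith
  · simp only [angleKey, det2, ha1.ne', hb1, if_true, if_false, not_lt_bot, false_iff, not_lt,
      mul_zero, zero_sub, neg_nonpos]
    positivity
  · simp only [angleKey, det2, ha1, hb1.ne', if_true, if_false, WithBot.bot_lt_coe, true_iff,
      zero_mul, sub_zero]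
    positivity
  · simp [angleKey, det2, ha1, hb1]

theorem det2_neg_iff_angleKey_lt {a b : Fin 2 → F} (ha : IsUpper a) (hb : IsUpper b) :
    det2 a b < 0 ↔ angleKey b < angleKey a := by
  rw [angleKey_lt_iff hb ha, det2_swap a b, neg_pos]

theorem det2_eq_zero_of_angleKey_eq {a b : Fin 2 → F} (ha : IsUpper a) (hb : IsUpper b)
    (h : angleKey a = angleKey b) : det2 a b = 0 := by
  have hpos := (angleKey_lt_iff ha hb).not.mp h.not_lt
  have hneg := (det2_neg_iff_angleKey_lt ha hb).not.mpr h.not_gt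
  push Not at hpos hneg
  exact le_antisymm hpos hneg

theorem injective_angleKey_comp {n : ℕ} {p : Fin n → Fin 2 → F} (hp : ∀ i, IsUpper (p i))
    (hp0 : Pairwise fun i j => det2 (p i) (p j) ≠ 0) : Function.Injective (angleKey ∘ p) :=
  fun i j hij => by_contra fun hne => hp0 hne (det2_eq_zero_of_angleKey_eq (hp i) (hp j) hij)

theorem exists_perm_sign_det2_eq_of_isUpper {n : ℕ} {p q : Fin n → Fin 2 → F}
    (hp : ∀ i, IsUpper (p i)) (hq : ∀ i, IsUpper (q i))
    (hp0 : Pairwise fun i j => det2 (p i) (p j) ≠ 0)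
    (hq0 : Pairwise fun i j => det2 (q i) (q j) ≠ 0) :
    ∃ σ : Equiv.Perm (Fin n), ∀ i j, sign (det2 (p i) (p j)) = sign (det2 (q (σ i)) (q (σ j))) := by
  obtain ⟨σ, hσ⟩ :=
    exists_perm_lt_iff_lt (injective_angleKey_comp hp hp0) (injective_angleKey_comp hq hq0)
  refine ⟨σ, fun i j => sign_eq_sign_of_pos_iff_of_neg_iff ?_ ?_⟩
  · rw [← angleKey_lt_iff (hp i) (hp j), ← angleKey_lt_iff (hq _) (hq _)]
    exact hσ i j
  · rw [det2_neg_iff_angleKey_lt (hp i) (hp j), det2_neg_iff_angleKey_lt (hq _) (hq _)]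
    exact hσ j i

theorem exists_perm_sign_det2_eq {n : ℕ} {v w : Fin n → Fin 2 → F}
    (hv0 : ∀ i, v i ≠ 0) (hw0 : ∀ i, w i ≠ 0)
    (hv : Pairwise fun i j => det2 (v i) (v j) ≠ 0)
    (hw : Pairwise fun i j => det2 (w i) (w j) ≠ 0) :
    ∃ (σ : Equiv.Perm (Fin n)) (η : Fin n → F), (∀ i, η i = 1 ∨ η i = -1) ∧
      ∀ i j, sign (det2 (v i) (v j)) = sign (det2 (η i • w (σ i)) (η j • w (σ j))) := by
  choose s hs hsv using fun i => exists_sign_isUpper (hv0 i)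
  choose t ht htw using fun i => exists_sign_isUpper (hw0 i)
  have hs1 : ∀ i, s i * s i = 1 := fun i => mul_self_eq_one_iff.mpr (hs i)
  have ht1 : ∀ i, t i * t i = 1 := fun i => mul_self_eq_one_iff.mpr (ht i)
  have hs0 : ∀ i, s i ≠ 0 := fun i => left_ne_zero_of_mul_eq_one (hs1 i)
  have ht0 : ∀ i, t i ≠ 0 := fun i => left_ne_zero_of_mul_eq_one (ht1 i)
  obtain ⟨σ, hσ⟩ := exists_perm_sign_det2_eq_of_isUpper hsv htw
    (fun i j hij => det2_smul_smul_ne_zero (hs0 i) (hs0 j) (hv hij))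
    (fun i j hij => det2_smul_smul_ne_zero (ht0 i) (ht0 j) (hw hij))
  refine ⟨σ, fun i => s i * t (σ i), fun i => mul_self_eq_one_iff.mp ?_, fun i j => ?_⟩
  · rw [mul_mul_mul_comm, hs1, ht1, one_mul]
  · have hv_eq : ∀ i, v i = s i • s i • v i := fun i => by rw [smul_smul, hs1, one_smul]
    rw [hv_eq i, hv_eq j, sign_det2_smul_smul, hσ, mul_smul, mul_smul,
      sign_det2_smul_smul (s i)]

end OrderedField

/-- Any two normal systems of the same cardinality `n` in the plane `F^2` are
isomorphic: for any two families `{± v i}`, `{± w i}` of antipodal pairs of nonzero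
vectors lying on `n` pairwise distinct lines through the origin, there is a convex
positive bijection between them. -/
theorem two_dimensional_normal_systems_isomorphic {F : Type*} [Field F] [LinearOrder F] [IsStrictOrderedRing F]
    {n : ℕ} (v w : Fin n → Fin 2 → F)
    (hv0 : ∀ i, v i ≠ 0) (hw0 : ∀ i, w i ≠ 0)
    (hv : ∀ i j : Fin n, i ≠ j → Submodule.span F {v i} ≠ Submodule.span F {v j})
    (hw : ∀ i j : Fin n, i ≠ j → Submodule.span F {w i} ≠ Submodule.span F {w j}) :
    ∃ (σ : Equiv.Perm (Fin n)) (η : Fin n → F), IsCPB v w σ η := by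
  have hdet : ∀ u : Fin n → Fin 2 → F, (∀ i, u i ≠ 0) →
      (∀ i j, i ≠ j → Submodule.span F {u i} ≠ Submodule.span F {u j}) →
      Pairwise fun i j => det2 (u i) (u j) ≠ 0 :=
    fun u hu0 hu i j hij => det2_ne_zero_of_span_ne (hu0 i) (hu0 j) (hu i j hij)
  obtain ⟨σ, η, hη, hsign⟩ := exists_perm_sign_det2_eq hv0 hw0 (hdet v hv0 hv) (hdet w hw0 hw)
  exact ⟨σ, η, isCPB_of_sign_det2_eq hη (hdet v hv0 hv) hsign⟩
end

section
/- (Observation on the central point of intersection.) Let 𝔽 be an ordered field and let L_1, L_2, L_3, L_4 be four lines in general position in 𝔽^2 (pairwise non-parallel, no three concurrent) such that the three points L_1 ∩ L_2, L_1 ∩ L_3, L_2 ∩ L_3 all lie strictly on one side of L_4. Fix nonzero normal vectors n_1, n_2, n_3, n_4 of L_1, L_2, L_3, L_4 respectively, and for each pair 1 ≤ i < j ≤ 3 write n_4 = α_{ij} n_i + β_{ij} n_j (these coefficients exist, are unique, and are nonzero). Each of n_1, n_2, n_3 occurs in exactly two of these three expressions; then there is exactly one index k ∈ {1, 2, 3}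 whose two coefficients (in its two occurrences) have opposite signs, and this k is precisely the index for which the point L_k ∩ L_4 lies strictly between the other two of the three points L_1 ∩ L_4, L_2 ∩ L_4, L_3 ∩ L_4 on L_4. -/
open Finset

/-- The affine hyperplane in `F^m` with equation `∑ j, a j * x j = b`. -/
def hypSet {F : Type*} [Field F] {m : ℕ} (a : Fin m → F) (b : F) :
    Set (Fin m → F) :=
  {x | ∑ j, a j * x j = b}

/-- A family of `n` affine hyperplanes (given by normal vectors `a i` and constants
`b i`) in `F^m` is a hyperplane arrangement in general position: every nonempty
subfamily of `r ≤ m` of the hyperplanes meets in a nonempty affine subspace of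
dimension `m - r`, and any more than `m` of the hyperplanes have empty intersection. -/
def IsArrangement {F : Type*} [Field F] {m n : ℕ}
    (a : Fin n → Fin m → F) (b : Fin n → F) : Prop :=
  (∀ i, a i ≠ 0) ∧
  (∀ T : Finset (Fin n), T.Nonempty → T.card ≤ m →
    ∃ A : AffineSubspace F (Fin m → F),
      (A : Set (Fin m → F)) = ⋂ i ∈ T, hypSet (a i) (b i) ∧
      (A : Set (Fin m → F)).Nonempty ∧
      Module.finrank F A.direction = m - T.card) ∧
  (∀ T : Finset (Fin n), m < T.card → ⋂ i ∈ T, hypSet (a i) (b i) = ∅)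

/-!
Write `f k x = ∑ j, a k j * x j - b k`, an affine function vanishing exactly on `L_k`. If
`a 3 = c i j • a i + c j i • a j`, then `f 3 - c i j • f i - c j i • f j` is constant, and comparing
its values at `L_i ∩ L_j` and at `L_i ∩ L₃` gives `c j i * f j (q i) = -f 3 (L_i ∩ L_j)`. Since the
three points `L_i ∩ L_j` lie on the same side of `L₃`, the two coefficients of `a k` have opposite
signs iff `f k` has opposite signs at the two other points `q i, q j` of the line `L₃`, i.e. iff its
zero `q k` lies strictly between them. The points `q k` are distinct because no three lines are
concurrent, and exactly one of three distinct collinear points lies between the other two.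
-/

open AffineMap

section Betweenness

variable {F V P : Type*} [Field F] [LinearOrder F] [IsStrictOrderedRing F]
  [AddCommGroup V] [Module F V] [AddTorsor V P]

theorem sbtw_lineMap_left_iff {x y : P} (hxy : x ≠ y) (r : F) :
    Sbtw F y x (lineMap x y r) ↔ r < 0 := by
  rw [← lineMap_apply_one_sub, sbtw_iff_left_ne_and_right_mem_image_Ioi,
    (lineMap_injective F hxy.symm).mem_set_image]
  simp [hxy.symm, lt_sub_iff_add_lt]

theorem Collinear.sbtw_iff_mul_neg {x y z : P} (h : Collinear F {x, y, z}) {f : P →ᵃ[F] F}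
    (hx : f x = 0) (hy : f y ≠ 0) : Sbtw F y x z ↔ f y * f z < 0 := by
  have hxy : x ≠ y := by rintro rfl; exact hy hx
  obtain ⟨r, rfl⟩ := mem_affineSpan_pair_iff_exists_lineMap_eq.1 <|
    h.mem_affineSpan_of_mem_of_ne (p₃ := z) (by simp) (by simp) (by simp) hxy
  rw [sbtw_lineMap_left_iff hxy, f.apply_lineMap, hx, lineMap_apply_ring', sub_zero,
    add_zero, mul_left_comm]
  simpa using (mul_lt_mul_iff_of_pos_right (mul_self_pos.2 hy) (b := r) (c := 0)).symm

theorem Collinear.exactly_one_sbtw {x y z : P} (h : Collinear F {x, y, z})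
    (hxy : x ≠ y) (hxz : x ≠ z) (hyz : y ≠ z) :
    (Sbtw F y x z ∧ ¬ Sbtw F x y z ∧ ¬ Sbtw F x z y) ∨
    (¬ Sbtw F y x z ∧ Sbtw F x y z ∧ ¬ Sbtw F x z y) ∨
    (¬ Sbtw F y x z ∧ ¬ Sbtw F x y z ∧ Sbtw F x z y) := by
  rcases h.wbtw_or_wbtw_or_wbtw with h | h | h
  · have h : Sbtw F x y z := ⟨h, hxy.symm, hyz⟩
    exact Or.inr (Or.inl
      ⟨fun h' => h.not_swap_left h'.wbtw, h, fun h' => h.not_swap_right h'.wbtw⟩)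
  · have h : Sbtw F x z y := sbtw_comm.1 ⟨h, hyz.symm, hxz.symm⟩
    exact Or.inr (Or.inr ⟨fun h' => h.not_swap_left (wbtw_comm.1 h'.wbtw),
      fun h' => h.not_swap_right h'.wbtw, h⟩)
  · have h : Sbtw F y x z := sbtw_comm.1 ⟨h, hxz, hxy⟩
    exact Or.inl ⟨h, fun h' => h.not_swap_left h'.wbtw,
      fun h' => (sbtw_comm.1 h).not_swap_left h'.wbtw⟩

theorem mem_openSegment_iff_sbtw {x y z : V} (hyz : y ≠ z) :
    x ∈ openSegment F y z ↔ Sbtw F y x z := by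
  rw [sbtw_iff_mem_image_Ioo_and_ne, openSegment_eq_image_lineMap]
  simp [hyz]

theorem Collinear.mem_openSegment_iff_mul_neg {x y z : V} (h : Collinear F {x, y, z})
    {f : V →ᵃ[F] F} (hx : f x = 0) (hy : f y ≠ 0) :
    x ∈ openSegment F y z ↔ f y * f z < 0 := by
  rcases eq_or_ne y z with rfl | hyz
  · have hxy : x ≠ y := by rintro rfl; exact hy hx
    simp [hxy, mul_self_nonneg]
  · rw [mem_openSegment_iff_sbtw hyz, h.sbtw_iff_mul_neg hx hy]

theorem Collinear.mul_neg_iff_mem_openSegment {x y z : V} (h : Collinear F {x, y, z})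
    {f : V →ᵃ[F] F} (hx : f x = 0) {u v s t : F} (hu : u * f y = -s) (hv : v * f z = -t)
    (hst : 0 < s * t) : u * v < 0 ↔ x ∈ openSegment F y z := by
  have hy : f y ≠ 0 := by
    rintro hy
    rw [hy, mul_zero, zero_eq_neg] at hu
    simp [hu] at hst
  have hprod : u * v * (f y * f z) = s * t := by
    linear_combination (v * f z) * hu - s * hv
  rw [neg_iff_neg_of_mul_pos (hprod ▸ hst), h.mem_openSegment_iff_mul_neg hx hy]

theorem Collinear.exactly_one_mem_openSegment {x y z : V} (h : Collinear F {x, y, z})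
    (hxy : x ≠ y) (hxz : x ≠ z) (hyz : y ≠ z) :
    (x ∈ openSegment F y z ∧ y ∉ openSegment F x z ∧ z ∉ openSegment F x y) ∨
    (x ∉ openSegment F y z ∧ y ∈ openSegment F x z ∧ z ∉ openSegment F x y) ∨
    (x ∉ openSegment F y z ∧ y ∉ openSegment F x z ∧ z ∈ openSegment F x y) := by
  rw [mem_openSegment_iff_sbtw hyz, mem_openSegment_iff_sbtw hxz, mem_openSegment_iff_sbtw hxy]
  exact h.exactly_one_sbtw hxy hxz hyz

end Betweenness

section Hyperplane

variable {F : Type*} [Field F] {m : ℕ}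

def hypAffine (a : Fin m → F) (b : F) : (Fin m → F) →ᵃ[F] F :=
  (dotProductEquiv F (Fin m) a).toAffineMap - AffineMap.const F _ b

theorem hypAffine_apply (a : Fin m → F) (b : F) (x : Fin m → F) :
    hypAffine a b x = ∑ j, a j * x j - b := by
  simp [hypAffine, dotProduct]

theorem mem_hypSet_iff {a : Fin m → F} {b : F} {x : Fin m → F} :
    x ∈ hypSet a b ↔ hypAffine a b x = 0 := by
  rw [hypAffine_apply, sub_eq_zero]
  rfl

theorem mul_hypAffine_eq_neg {a a' a₃ : Fin m → F} {b b' b₃ c d : F} (h : a₃ = c • a + d • a')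
    {p q : Fin m → F} (hp : p ∈ hypSet a b) (hp' : p ∈ hypSet a' b') (hq : q ∈ hypSet a b)
    (hq₃ : q ∈ hypSet a₃ b₃) :
    d * hypAffine a' b' q = -hypAffine a₃ b₃ p := by
  have key : ∀ x, hypAffine a₃ b₃ x =
      c * hypAffine a b x + d * hypAffine a' b' x + (c * b + d * b' - b₃) := by
    intro x
    simp only [hypAffine_apply, h, Pi.add_apply, Pi.smul_apply, smul_eq_mul, add_mul,
      sum_add_distrib, mul_assoc, ← mul_sum]
    ring
  rw [mem_hypSet_iff] at hp hp' hq hq₃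
  linear_combination key p - key q + hq₃ - c * hq + c * hp + d * hp'

end Hyperplane

namespace IsArrangement

variable {F : Type*} [Field F] {n : ℕ} {a : Fin n → Fin 2 → F} {b : Fin n → F}

theorem collinear_hypSet (hA : IsArrangement a b) (i : Fin n) :
    Collinear F (hypSet (a i) (b i)) := by
  obtain ⟨A, hA_eq, -, hdim⟩ := hA.2.1 {i} (singleton_nonempty i) (by simp)
  simp only [mem_singleton, Set.iInter_iInter_eq_left] at hA_eq
  rw [← hA_eq]
  change Module.rank F A.direction ≤ 1
  rw [← Module.finrank_eq_rank, hdim]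
  simp

theorem notMem_hypSet_of_mem_of_mem (hA : IsArrangement a b) {i j k : Fin n} (hij : i ≠ j)
    (hik : i ≠ k) (hjk : j ≠ k) {x : Fin 2 → F} (hi : x ∈ hypSet (a i) (b i))
    (hj : x ∈ hypSet (a j) (b j)) : x ∉ hypSet (a k) (b k) := by
  intro hk
  have hempty := hA.2.2 {i, j, k} <| by
    rw [card_eq_three.2 ⟨i, j, k, hij, hik, hjk, rfl⟩]
    norm_num
  exact Set.eq_empty_iff_forall_notMem.1 hempty x (by simp [hi, hj, hk])

end IsArrangement

/-- **Observation on the central point of intersection.** Let `L₀, L₁, L₂, L₃` be four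
lines in general position in `F²` (indexed by `Fin 4`, with `L₃` playing the role of the
"fourth line") such that the three intersection points of `L₀, L₁, L₂` lie strictly on
one side of `L₃`.  Writing the normal `a 3` of `L₃` as `a 3 = c i j • a i + c j i • a j`
for each pair `i < j` in `{0, 1, 2}`, exactly one index `k ∈ {0, 1, 2}` has its two
coefficients (in its two occurrences) of opposite signs, and `k` is precisely the index
for which `L_k ∩ L₃` lies strictly between the other two of the three points
`L₀ ∩ L₃, L₁ ∩ L₃, L₂ ∩ L₃`. -/
theorem central_point_observation {F : Type*} [Field F] [LinearOrder F] [IsStrictOrderedRing F]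
    (a : Fin 4 → Fin 2 → F) (b : Fin 4 → F) (hA : IsArrangement a b)
    (p01 p02 p12 : Fin 2 → F)
    (hp01 : p01 ∈ hypSet (a 0) (b 0) ∧ p01 ∈ hypSet (a 1) (b 1))
    (hp02 : p02 ∈ hypSet (a 0) (b 0) ∧ p02 ∈ hypSet (a 2) (b 2))
    (hp12 : p12 ∈ hypSet (a 1) (b 1) ∧ p12 ∈ hypSet (a 2) (b 2))
    (hside : (∑ j, a 3 j * p01 j < b 3 ∧ ∑ j, a 3 j * p02 j < b 3 ∧
                ∑ j, a 3 j * p12 j < b 3) ∨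
             (b 3 < ∑ j, a 3 j * p01 j ∧ b 3 < ∑ j, a 3 j * p02 j ∧
                b 3 < ∑ j, a 3 j * p12 j))
    (c : Fin 4 → Fin 4 → F)
    (hc : ∀ i j : Fin 4, i ≠ j → i ≠ 3 → j ≠ 3 → a 3 = c i j • a i + c j i • a j)
    (q : Fin 3 → Fin 2 → F)
    (hq : ∀ k : Fin 3,
      q k ∈ hypSet (a k.castSucc) (b k.castSucc) ∧ q k ∈ hypSet (a 3) (b 3)) :
    ((c 0 1 * c 0 2 < 0 ∧ ¬ (c 1 0 * c 1 2 < 0) ∧ ¬ (c 2 0 * c 2 1 < 0)) ∨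
     (¬ (c 0 1 * c 0 2 < 0) ∧ c 1 0 * c 1 2 < 0 ∧ ¬ (c 2 0 * c 2 1 < 0)) ∨
     (¬ (c 0 1 * c 0 2 < 0) ∧ ¬ (c 1 0 * c 1 2 < 0) ∧ c 2 0 * c 2 1 < 0)) ∧
    (c 0 1 * c 0 2 < 0 ↔ q 0 ∈ openSegment F (q 1) (q 2)) ∧
    (c 1 0 * c 1 2 < 0 ↔ q 1 ∈ openSegment F (q 0) (q 2)) ∧
    (c 2 0 * c 2 1 < 0 ↔ q 2 ∈ openSegment F (q 0) (q 1)) := by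
  obtain ⟨hq0, hq0'⟩ : q 0 ∈ hypSet (a 0) (b 0) ∧ q 0 ∈ hypSet (a 3) (b 3) := hq 0
  obtain ⟨hq1, hq1'⟩ : q 1 ∈ hypSet (a 1) (b 1) ∧ q 1 ∈ hypSet (a 3) (b 3) := hq 1
  obtain ⟨hq2, hq2'⟩ : q 2 ∈ hypSet (a 2) (b 2) ∧ q 2 ∈ hypSet (a 3) (b 3) := hq 2
  have hcol : Collinear F {q 0, q 1, q 2} :=
    (hA.collinear_hypSet 3).subset (by simp [Set.insert_subset_iff, hq0', hq1', hq2'])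
  set s := hypAffine (a 3) (b 3) with hs_def
  have hs : 0 < s p01 * s p02 ∧ 0 < s p01 * s p12 ∧ 0 < s p02 * s p12 := by
    simp only [hs_def, hypAffine_apply, mul_pos_iff, sub_pos, sub_neg]
    tauto
  have h0 : c 0 1 * c 0 2 < 0 ↔ q 0 ∈ openSegment F (q 1) (q 2) :=
    hcol.mul_neg_iff_mem_openSegment (mem_hypSet_iff.1 hq0)
      (mul_hypAffine_eq_neg (hc 1 0 (by decide) (by decide) (by decide)) hp01.2 hp01.1 hq1 hq1')
      (mul_hypAffine_eq_neg (hc 2 0 (by decide) (by decide) (by decide)) hp02.2 hp02.1 hq2 hq2')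
      hs.1
  have h1 : c 1 0 * c 1 2 < 0 ↔ q 1 ∈ openSegment F (q 0) (q 2) :=
    (Set.insert_comm (q 0) (q 1) _ ▸ hcol).mul_neg_iff_mem_openSegment (mem_hypSet_iff.1 hq1)
      (mul_hypAffine_eq_neg (hc 0 1 (by decide) (by decide) (by decide)) hp01.1 hp01.2 hq0 hq0')
      (mul_hypAffine_eq_neg (hc 2 1 (by decide) (by decide) (by decide)) hp12.2 hp12.1 hq2 hq2')
      hs.2.1
  have h2 : c 2 0 * c 2 1 < 0 ↔ q 2 ∈ openSegment F (q 0) (q 1) :=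
    (Set.insert_comm (q 0) (q 2) _ ▸ Set.pair_comm (q 1) (q 2) ▸ hcol)
      |>.mul_neg_iff_mem_openSegment (mem_hypSet_iff.1 hq2)
      (mul_hypAffine_eq_neg (hc 0 2 (by decide) (by decide) (by decide)) hp02.1 hp02.2 hq0 hq0')
      (mul_hypAffine_eq_neg (hc 1 2 (by decide) (by decide) (by decide)) hp12.1 hp12.2 hq1 hq1')
      hs.2.2
  have hne : ∀ i j : Fin 3, i ≠ j → q i ≠ q j := fun i j hij h =>
    hA.notMem_hypSet_of_mem_of_mem (Fin.castSucc_lt_last i).ne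
      (Fin.castSucc_injective _ |>.ne hij) (Fin.castSucc_lt_last j).ne' (hq i).1 (hq i).2
      (h ▸ (hq j).1)
  refine ⟨?_, h0, h1, h2⟩
  rw [h0, h1, h2]
  exact hcol.exactly_one_mem_openSegment (hne 0 1 (by decide)) (hne 0 2 (by decide))
    (hne 1 2 (by decide))
end

section
/- Let 𝔽 be an ordered field, and let (ℋ_n^m)_1 = {H^1_i : ∑_j a^1_{ij} x_j = b_i} and (ℋ_n^m)_2 = {H^2_i : ∑_j a^2_{ij} x_j = c_i} be two hyperplane arrangements in 𝔽^m that are isomorphic by an isomorphism which is the identity on subscripts. Let 𝒞_1, 𝒞_2 ⊆ 𝔽^n be their associated concurrency arrangements, and suppose (b_1, …, b_n) and (c_1, …, c_n) lie in the interiors of cones of 𝒞_1 and 𝒞_2 respectively. Suppose indices 1 ≤ i_1 < … < i_{m+1} ≤ n give rise to an m-dimensional simplex polyhedrality of both arrangements. If (b_1, …, b_n) and (c_1, …, c_n) are moved to new points (b̃_1, …, b̃_n) and (c̃_1, …, c̃_n) lying in the interiors of the adjacent cones obtained by crossing exactly the single boundary hyperplane of 𝒞_1, respectively 𝒞_2,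 corresponding to the subset {i_1, …, i_{m+1}}, then the new hyperplane arrangements {∑_j a^1_{ij} x_j = b̃_i} and {∑_j a^2_{ij} x_j = c̃_i} are again isomorphic by an isomorphism which is the identity on subscripts. -/
open Finset

/-- `φ` is an isomorphism between the hyperplane arrangements `(a1, b1)` and `(a2, b2)`:
for every set `T` of `m - 1` indices, along the corresponding lines `⋂ i ∈ T, H¹ᵢ` and
`⋂ i ∈ T, H²_{φ i}` of the two arrangements, the linear orders of the vertices agree,
possibly after reversal (equivalently, betweenness of corresponding triples of vertices
is preserved), under the correspondence of vertices induced by `φ`.  Here `v k`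
(resp. `w k`) denotes the vertex of the first (resp. second) arrangement obtained by
intersecting the line indexed by `T` (resp. by the `φ`-image of `T`) with the
hyperplane of index `k` (resp. `φ k`). -/
def IsArrIso {F : Type*} [Field F] [LinearOrder F] [IsStrictOrderedRing F] {m n : ℕ}
    (a1 : Fin n → Fin m → F) (b1 : Fin n → F)
    (a2 : Fin n → Fin m → F) (b2 : Fin n → F)
    (φ : Equiv.Perm (Fin n)) : Prop :=
  ∀ T : Finset (Fin n), T.card = m - 1 →
    ∀ v w : Fin n → Fin m → F,
      (∀ k ∉ T, ∀ i ∈ insert k T, v k ∈ hypSet (a1 i) (b1 i)) →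
      (∀ k ∉ T, ∀ i ∈ insert k T, w k ∈ hypSet (a2 (φ i)) (b2 (φ i))) →
      ∀ k1 ∉ T, ∀ k2 ∉ T, ∀ k3 ∉ T,
        (v k2 ∈ segment F (v k1) (v k3) ↔ w k2 ∈ segment F (w k1) (w k3))

/-- The polyhedral region of the arrangement determined by a choice `ε` of one of the
two inequalities `≤` / `≥` for each hyperplane. -/
def regionOf {F : Type*} [Field F] [LinearOrder F] [IsStrictOrderedRing F] {m n : ℕ}
    (a : Fin n → Fin m → F) (b : Fin n → F) (ε : Fin n → Bool) : Set (Fin m → F) :=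
  {x | ∀ i, if ε i then ∑ j, a i j * x j ≤ b i else b i ≤ ∑ j, a i j * x j}

/-- A set `R` is unbounded if it contains distinct points `u, v` with
`v + t • (u - v) ∈ R` for all `t ≥ 0` or for all `t ≤ 0`; it is bounded otherwise. -/
def IsUnboundedSet {F : Type*} [Field F] [LinearOrder F] [IsStrictOrderedRing F] {m : ℕ} (R : Set (Fin m → F)) : Prop :=
  ∃ u v : Fin m → F, u ∈ R ∧ v ∈ R ∧ u ≠ v ∧
    ((∀ t : F, 0 ≤ t → v + t • (u - v) ∈ R) ∨ (∀ t : F, t ≤ 0 → v + t • (u - v) ∈ R))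

/-- The defining polynomial (a determinant) of the hyperplane of the concurrency
arrangement in `F^n` associated to an `(m+1)`-subset `s` of the hyperplanes of the
arrangement with coefficient matrix `a`: the rows of the matrix are
`(a i 0, …, a i (m-1), y i)` for `i` running over `s` in increasing order.
(Junk value `0` if `s` does not have cardinality `m + 1`.) -/
noncomputable def concDet {F : Type*} [Field F] {m n : ℕ}
    (a : Fin n → Fin m → F) (s : Finset (Fin n)) (y : Fin n → F) : F :=
  if h : s.card = m + 1 then
    Matrix.det (Matrix.of fun k j : Fin (m + 1) =>
      if hj : (j : ℕ) < m then a (s.orderIsoOfFin h k).1 ⟨j, hj⟩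
      else y (s.orderIsoOfFin h k).1)
  else 0

/-- The polyhedral region cut out by the subfamily `s` of the hyperplanes with the
choice of sides `ε`. -/
def subRegionOf {F : Type*} [Field F] [LinearOrder F] [IsStrictOrderedRing F] {m n : ℕ}
    (a : Fin n → Fin m → F) (b : Fin n → F) (s : Finset (Fin n)) (ε : Fin n → Bool) :
    Set (Fin m → F) :=
  {x | ∀ i ∈ s, if ε i then ∑ j, a i j * x j ≤ b i else b i ≤ ∑ j, a i j * x j}

/-- The `m + 1` hyperplanes indexed by `s` give rise to an `m`-dimensional simplex
polyhedrality: some choice of sides of these hyperplanes cuts out a nonempty bounded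
polyhedral region. -/
def IsSimplexPolyhedrality {F : Type*} [Field F] [LinearOrder F] [IsStrictOrderedRing F] {m n : ℕ}
    (a : Fin n → Fin m → F) (b : Fin n → F) (s : Finset (Fin n)) : Prop :=
  s.card = m + 1 ∧ ∃ ε : Fin n → Bool,
    (subRegionOf a b s ε).Nonempty ∧ ¬ IsUnboundedSet (subRegionOf a b s ε)

/-!
Fix a line `⋂ i ∈ T, H i` of an arrangement with constants `y`, and let `v k` be its vertex on
`H k`. Cramer's rule applied to the column `(-v k1, 1)` shows that the concurrency determinant of
`T ∪ {k1, k2}` is `(y k2 - a k2 ⬝ᵥ v k1)` times a factor not depending on `y`. As `a k2 ⬝ᵥ ·` is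
injective on the line, `v k2` lies between `v k1` and `v k3` iff
`(y k2 - a k2 ⬝ᵥ v k1) * (y k2 - a k2 ⬝ᵥ v k3) ≤ 0`. Hence, when `y` moves, the betweenness of a
triple of vertices flips exactly when an odd number of the two determinants of `T ∪ {k1, k2}`
and `T ∪ {k2, k3}` change sign. Crossing the wall of the same `(m+1)`-set in both concurrency
arrangements changes the same determinants, so betweenness flips in both or in neither.
-/

section Segment

variable {𝕜 E E' : Type*} [Field 𝕜] [LinearOrder 𝕜] [IsStrictOrderedRing 𝕜]
  [AddCommGroup E] [Module 𝕜 E] [AddCommGroup E'] [Module 𝕜 E']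

theorem Set.InjOn.mem_segment_iff {f : E →ₗ[𝕜] E'} {L : Set E} (hf : Set.InjOn f L)
    (hL : Convex 𝕜 L) {x y z : E} (hx : x ∈ L) (hy : y ∈ L) (hz : z ∈ L) :
    f y ∈ segment 𝕜 (f x) (f z) ↔ y ∈ segment 𝕜 x z := by
  refine ⟨fun h => ?_, fun h => ?_⟩
  · rw [← f.coe_toAffineMap, ← image_segment] at h
    obtain ⟨q, hq, hfq⟩ := h
    rwa [← hf (hL.segment_subset hx hz hq) hy hfq]
  · rw [← f.coe_toAffineMap, ← image_segment]
    exact ⟨y, h, rfl⟩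

theorem mem_segment_iff_sub_mul_sub_nonpos {x y z : 𝕜} :
    y ∈ segment 𝕜 x z ↔ (y - x) * (y - z) ≤ 0 := by
  rw [segment_eq_uIcc, Set.mem_uIcc, mul_nonpos_iff]
  constructor
  · rintro (⟨hxy, hyz⟩ | ⟨hzy, hyx⟩)
    · exact Or.inl ⟨sub_nonneg.2 hxy, sub_nonpos.2 hyz⟩
    · exact Or.inr ⟨sub_nonpos.2 hyx, sub_nonneg.2 hzy⟩
  · rintro (⟨hxy, hyz⟩ | ⟨hyx, hzy⟩)
    · exact Or.inl ⟨sub_nonneg.1 hxy, sub_nonpos.1 hyz⟩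
    · exact Or.inr ⟨sub_nonneg.1 hzy, sub_nonpos.1 hyx⟩

theorem nonpos_iff_nonpos_iff_mul_pos {u w : 𝕜} (hu : u ≠ 0) (hw : w ≠ 0) :
    (u ≤ 0 ↔ (w ≤ 0 ↔ 0 < u * w)) := by
  rcases hu.lt_or_gt with hu | hu <;> rcases hw.lt_or_gt with hw | hw
  · simp [hu.le, hw.le, mul_pos_of_neg_of_neg hu hw]
  · simp [hu.le, hw.not_ge, (mul_neg_of_neg_of_pos hu hw).not_gt]
  · simp [hu.not_ge, hw.le, (mul_neg_of_pos_of_neg hu hw).not_gt]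
  · simp [hu.not_ge, hw.not_ge, mul_pos hu hw]

end Segment

section Arrangement

open Matrix

variable {F : Type*} [Field F] {m n : ℕ}

theorem mem_hypSet {a x : Fin m → F} {b : F} : x ∈ hypSet a b ↔ a ⬝ᵥ x = b := Iff.rfl

def IsVertexFamily (a : Fin n → Fin m → F) (y : Fin n → F) (T : Finset (Fin n))
    (v : Fin n → Fin m → F) : Prop :=
  ∀ k ∉ T, ∀ i ∈ insert k T, v k ∈ hypSet (a i) (y i)

theorem IsArrangement.exists_isVertexFamily {a : Fin n → Fin m → F} {y : Fin n → F}
    (hA : IsArrangement a y) {T : Finset (Fin n)} (hT : T.card < m) :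
    ∃ v, IsVertexFamily a y T v := by
  have hvertex : ∀ k, ∃ p, ∀ i ∈ insert k T, p ∈ hypSet (a i) (y i) := fun k => by
    obtain ⟨A, hA_eq, ⟨p, hp⟩, -⟩ :=
      hA.2.1 (insert k T) (insert_nonempty k T) ((card_insert_le k T).trans hT)
    exact ⟨p, Set.mem_iInter₂.mp (hA_eq ▸ hp)⟩
  choose v hv using hvertex
  exact ⟨v, fun k _ => hv k⟩

theorem IsArrangement.eq_of_dotProduct_eq {a : Fin n → Fin m → F} {b : Fin n → F}
    (hA : IsArrangement a b) {S : Finset (Fin n)} (hS : m ≤ S.card) {x z : Fin m → F}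
    (h : ∀ i ∈ S, a i ⬝ᵥ x = a i ⬝ᵥ z) : x = z := by
  obtain ⟨S', hS'S, hS'⟩ := exists_subset_card_eq hS
  obtain rfl | hne := S'.eq_empty_or_nonempty
  · rw [card_empty] at hS'
    subst hS'
    exact Subsingleton.elim x z
  obtain ⟨A, hA_eq, ⟨p, hp⟩, hdim⟩ := hA.2.1 S' hne hS'.le
  have hdir : A.direction = ⊥ :=
    Submodule.finrank_eq_zero.mp (by rw [hdim, hS', Nat.sub_self])
  have hp' : (x - z) +ᵥ p ∈ A := by
    rw [hA_eq] at hp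
    rw [← SetLike.mem_coe, hA_eq]
    refine Set.mem_iInter₂.mpr fun i hi => ?_
    have hpi : a i ⬝ᵥ p = b i := Set.mem_iInter₂.mp hp i hi
    rw [mem_hypSet, vadd_eq_add, dotProduct_add, dotProduct_sub, h i (hS'S hi), sub_self,
      zero_add, hpi]
  have hxz := AffineSubspace.vsub_mem_direction hp' hp
  rw [hdir, vadd_vsub, Submodule.mem_bot, sub_eq_zero] at hxz
  exact hxz

theorem concDet_eq_sub_mul {a : Fin n → Fin m → F} {s : Finset (Fin n)} {y : Fin n → F}
    {x : Fin m → F} (k : Fin n) (hx : ∀ i ∈ s, i ≠ k → a i ⬝ᵥ x = y i) :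
    concDet a s y = (y k - a k ⬝ᵥ x) * concDet a s (Pi.single k (1 : F)) := by
  unfold concDet
  split_ifs with hs
  swap
  · rw [mul_zero]
  set e : Fin (m + 1) → Fin n := fun r => s.orderIsoOfFin hs r
  let M : (Fin n → F) → Matrix (Fin (m + 1)) (Fin (m + 1)) F := fun y' =>
    of fun r j => if hj : (j : ℕ) < m then a (e r) ⟨j, hj⟩ else y' (e r)
  have hupdate : ∀ y', (M y).updateCol (Fin.last m) (fun r => y' (e r)) = M y' := by
    intro y'
    ext r j
    by_cases hj : (j : ℕ) < m
    · have : j ≠ Fin.last m := Fin.ne_of_lt hj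
      simp [M, this, hj]
    · have : j = Fin.last m := Fin.ext (by have := j.isLt; rw [Fin.val_last]; omega)
      simp [M, this]
  -- `w = (-x, 1)` turns the last column of `M y` into the residuals `y i - a i ⬝ᵥ x`,
  -- which vanish except at `i = k`
  let w : Fin (m + 1) → F := fun j => if hj : (j : ℕ) < m then -x ⟨j, hj⟩ else 1
  have hMw :
      M y *ᵥ w = (y k - a k ⬝ᵥ x) • fun r => (Pi.single k (1 : F) : Fin n → F) (e r) := by
    ext r
    simp only [mulVec, dotProduct, Fin.sum_univ_castSucc, M, w, of_apply,
      Fin.val_castSucc, Fin.is_lt, dif_pos, Fin.val_last, lt_irrefl, dif_neg, not_false_eq_true,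
      mul_neg, sum_neg_distrib, mul_one, Pi.smul_apply, smul_eq_mul]
    by_cases hr : e r = k
    · simp [hr, neg_add_eq_sub]
    · have := hx (e r) (s.orderIsoOfFin hs r).2 hr
      simp only [dotProduct] at this
      simp [hr, this]
  calc (M y).det = (M y).det * w (Fin.last m) := by simp [w]
    _ = cramer (M y) (M y *ᵥ w) (Fin.last m) := by
      rw [cramer_eq_adjugate_mulVec, mulVec_mulVec, adjugate_mul,
        smul_mulVec, one_mulVec, Pi.smul_apply, smul_eq_mul]
    _ = _ := by
      rw [cramer_apply, hMw, det_updateCol_smul, hupdate]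

theorem IsVertexFamily.concDet_eq_sub_mul {a : Fin n → Fin m → F} {T : Finset (Fin n)}
    {k1 k2 : Fin n} {y : Fin n → F} {v : Fin n → Fin m → F}
    (hv : IsVertexFamily a y T v) (hk1 : k1 ∉ T) :
    concDet a (insert k2 (insert k1 T)) y =
      (y k2 - a k2 ⬝ᵥ v k1) * concDet a (insert k2 (insert k1 T)) (Pi.single k2 (1 : F)) :=
  _root_.concDet_eq_sub_mul k2 fun i hi hik2 =>
    hv k1 hk1 i ((mem_insert.mp hi).resolve_left hik2)

end Arrangement

section Isomorphism

variable {F : Type*} [Field F] [LinearOrder F] [IsStrictOrderedRing F] {m n : ℕ}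
  {a : Fin n → Fin m → F} {T : Finset (Fin n)} {k1 k2 k3 : Fin n}

/-- Along a line of the arrangement the linear form of `H k2` is injective, so betweenness of
vertices can be read off from the values of that form. -/
theorem IsVertexFamily.mem_segment_iff {b y : Fin n → F} {v : Fin n → Fin m → F}
    (hA : IsArrangement a b) (hT : m - 1 ≤ T.card) (hv : IsVertexFamily a y T v)
    (hk1 : k1 ∉ T) (hk2 : k2 ∉ T) (hk3 : k3 ∉ T) :
    v k2 ∈ segment F (v k1) (v k3) ↔ (y k2 - a k2 ⬝ᵥ v k1) * (y k2 - a k2 ⬝ᵥ v k3) ≤ 0 := by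
  set L : Set (Fin m → F) := {x | ∀ i ∈ T, a i ⬝ᵥ x = y i}
  have hL : Convex F L := by
    simp only [L, Set.ofPred_forall]
    exact convex_iInter₂ fun i _ => convex_hyperplane (dotProductBilin F F (a i)).isLinear _
  have hinj : Set.InjOn (dotProductBilin F F (a k2)) L := by
    intro x hx z hz hxz
    refine hA.eq_of_dotProduct_eq (S := insert k2 T) ?_ fun i hi => ?_
    · rw [card_insert_of_notMem hk2]
      omega
    · obtain rfl | hi := mem_insert.mp hi
      · exact hxz
      · rw [hx i hi, hz i hi]
  have hmem : ∀ k ∉ T, v k ∈ L := fun k hk i hi => hv k hk i (mem_insert_of_mem hi)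
  have hv2 : a k2 ⬝ᵥ v k2 = y k2 := hv k2 hk2 k2 (mem_insert_self k2 T)
  rw [← hinj.mem_segment_iff hL (hmem k1 hk1) (hmem k2 hk2) (hmem k3 hk3),
    mem_segment_iff_sub_mul_sub_nonpos]
  simp only [dotProductBilin_apply_apply, hv2]

theorem IsVertexFamily.mem_segment_iff_mem_segment_iff {b y y' : Fin n → F}
    {v v' : Fin n → Fin m → F} (hA : IsArrangement a b) (hT : m - 1 ≤ T.card)
    (hv : IsVertexFamily a y T v) (hv' : IsVertexFamily a y' T v')
    (hk1 : k1 ∉ T) (hk2 : k2 ∉ T) (hk3 : k3 ∉ T)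
    (h1 : concDet a (insert k2 (insert k1 T)) y' * concDet a (insert k2 (insert k1 T)) y ≠ 0)
    (h3 : concDet a (insert k2 (insert k3 T)) y' * concDet a (insert k2 (insert k3 T)) y ≠ 0) :
    (v' k2 ∈ segment F (v' k1) (v' k3) ↔ (v k2 ∈ segment F (v k1) (v k3) ↔
      0 < (concDet a (insert k2 (insert k1 T)) y' * concDet a (insert k2 (insert k1 T)) y) *
        (concDet a (insert k2 (insert k3 T)) y' * concDet a (insert k2 (insert k3 T)) y))) := by
  rw [hv.concDet_eq_sub_mul hk1, hv'.concDet_eq_sub_mul hk1, hv.concDet_eq_sub_mul hk3,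
    hv'.concDet_eq_sub_mul hk3] at *
  rw [hv'.mem_segment_iff hA hT hk1 hk2 hk3, hv.mem_segment_iff hA hT hk1 hk2 hk3]
  set E1 := concDet a (insert k2 (insert k1 T)) (Pi.single k2 (1 : F))
  set E3 := concDet a (insert k2 (insert k3 T)) (Pi.single k2 (1 : F))
  simp only [mul_ne_zero_iff] at h1 h3
  obtain ⟨⟨hp1', hE1⟩, hp1, -⟩ := h1
  obtain ⟨⟨hp3', hE3⟩, hp3, -⟩ := h3
  have hsq : 0 < (E1 * E3) ^ 2 := sq_pos_of_ne_zero (mul_ne_zero hE1 hE3)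
  rw [show ∀ p1' p1 p3' p3 : F, p1' * E1 * (p1 * E1) * (p3' * E3 * (p3 * E3)) =
      p1' * p3' * (p1 * p3) * (E1 * E3) ^ 2 from fun _ _ _ _ => by ring,
    mul_pos_iff_of_pos_right hsq]
  exact nonpos_iff_nonpos_iff_mul_pos (mul_ne_zero hp1' hp3') (mul_ne_zero hp1 hp3)

end Isomorphism

theorem IsArrIso.of_concDet_mul_pos {F : Type*} [Field F] [LinearOrder F]
    [IsStrictOrderedRing F] {m n : ℕ} {a1 a2 : Fin n → Fin m → F} {b c bt ct : Fin n → F}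
    (hA1 : IsArrangement a1 b) (hA2 : IsArrangement a2 c)
    (hiso : IsArrIso a1 b a2 c (Equiv.refl (Fin n)))
    (hsign : ∀ s : Finset (Fin n), s.card = m + 1 →
      0 < (concDet a1 s bt * concDet a1 s b) * (concDet a2 s ct * concDet a2 s c)) :
    IsArrIso a1 bt a2 ct (Equiv.refl (Fin n)) := by
  intro T hT v w (hv : IsVertexFamily a1 bt T v) (hw : IsVertexFamily a2 ct T w)
    k1 hk1 k2 hk2 k3 hk3
  obtain rfl | hm := Nat.eq_zero_or_pos m
  · simp only [Subsingleton.elim (v k2) (v k1), Subsingleton.elim (w k2) (w k1),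
      left_mem_segment]
  by_cases h21 : k2 = k1
  · subst h21
    exact iff_of_true (left_mem_segment F _ _) (left_mem_segment F _ _)
  by_cases h23 : k2 = k3
  · subst h23
    exact iff_of_true (right_mem_segment F _ _) (right_mem_segment F _ _)
  have hcard : ∀ k ∉ T, k2 ≠ k → (insert k2 (insert k T)).card = m + 1 := fun k hk hk2k => by
    rw [card_insert_of_notMem (by simp [hk2k, hk2]), card_insert_of_notMem hk, hT]
    omega
  obtain ⟨v0, hv0⟩ := hA1.exists_isVertexFamily (T := T) (by omega)
  obtain ⟨w0, hw0⟩ := hA2.exists_isVertexFamily (T := T) (by omega)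
  have hs1 := hsign _ (hcard k1 hk1 h21)
  have hs3 := hsign _ (hcard k3 hk3 h23)
  rw [hv0.mem_segment_iff_mem_segment_iff hA1 hT.ge hv hk1 hk2 hk3
      (left_ne_zero_of_mul hs1.ne') (left_ne_zero_of_mul hs3.ne'),
    hw0.mem_segment_iff_mem_segment_iff hA2 hT.ge hw hk1 hk2 hk3
      (right_ne_zero_of_mul hs1.ne') (right_ne_zero_of_mul hs3.ne'),
    hiso T hT v0 w0 hv0 hw0 k1 hk1 k2 hk2 k3 hk3]
  refine iff_congr Iff.rfl (pos_iff_pos_of_mul_pos ?_)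
  convert mul_pos hs1 hs3 using 1
  ring

theorem concurrency_wall_crossing_general {F : Type*} [Field F] [LinearOrder F] [IsStrictOrderedRing F] {m n : ℕ}
    (a1 a2 : Fin n → Fin m → F) (b c bt ct : Fin n → F)
    (hA1 : IsArrangement a1 b) (hA2 : IsArrangement a2 c)
    (hiso : IsArrIso a1 b a2 c (Equiv.refl (Fin n)))
    (s0 : Finset (Fin n))
    (hbt : ∀ s : Finset (Fin n), s.card = m + 1 → s ≠ s0 →
      0 < concDet a1 s bt * concDet a1 s b)
    (hbt0 : concDet a1 s0 bt * concDet a1 s0 b < 0)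
    (hct : ∀ s : Finset (Fin n), s.card = m + 1 → s ≠ s0 →
      0 < concDet a2 s ct * concDet a2 s c)
    (hct0 : concDet a2 s0 ct * concDet a2 s0 c < 0) :
    IsArrIso a1 bt a2 ct (Equiv.refl (Fin n)) := by
  refine IsArrIso.of_concDet_mul_pos hA1 hA2 hiso fun s hs => ?_
  obtain rfl | hss0 := eq_or_ne s s0
  · exact mul_pos_of_neg_of_neg hbt0 hct0
  · exact mul_pos (hbt s hs hss0) (hct s hs hss0)

/-- **Theorem (moving through a wall of the concurrency arrangement).** Let `(a1, b)`
and `(a2, c)` be two hyperplane arrangements in `F^m`, isomorphic by an isomorphism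
which is the identity on subscripts, whose constant vectors `b` and `c` lie in the
interiors of cones of the respective concurrency arrangements (all concurrency
determinants are nonzero).  Suppose the indices `s0` (an `(m+1)`-subset) give rise to an
`m`-dimensional simplex polyhedrality of both arrangements, and move `b` and `c` to
points `bt` and `ct` lying in the interiors of the adjacent cones obtained by crossing
exactly the single boundary hyperplane of the concurrency arrangement corresponding to
`s0` (the sign of the `s0`-determinant flips while all other signs are preserved).
Then the new arrangements `(a1, bt)` and `(a2, ct)` are again isomorphic by an
isomorphism which is the identity on subscripts. -/
theorem concurrency_wall_crossing {F : Type*} [Field F] [LinearOrder F] [IsStrictOrderedRing F] {m n : ℕ}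
    (a1 a2 : Fin n → Fin m → F) (b c bt ct : Fin n → F)
    (hA1 : IsArrangement a1 b) (hA2 : IsArrangement a2 c)
    (hiso : IsArrIso a1 b a2 c (Equiv.refl (Fin n)))
    (hbint : ∀ s : Finset (Fin n), s.card = m + 1 → concDet a1 s b ≠ 0)
    (hcint : ∀ s : Finset (Fin n), s.card = m + 1 → concDet a2 s c ≠ 0)
    (s0 : Finset (Fin n)) (hs0 : s0.card = m + 1)
    (hsp1 : IsSimplexPolyhedrality a1 b s0) (hsp2 : IsSimplexPolyhedrality a2 c s0)
    (hbt : ∀ s : Finset (Fin n), s.card = m + 1 → s ≠ s0 →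
      0 < concDet a1 s bt * concDet a1 s b)
    (hbt0 : concDet a1 s0 bt * concDet a1 s0 b < 0)
    (hct : ∀ s : Finset (Fin n), s.card = m + 1 → s ≠ s0 →
      0 < concDet a2 s ct * concDet a2 s c)
    (hct0 : concDet a2 s0 ct * concDet a2 s0 c < 0) :
    IsArrIso a1 bt a2 ct (Equiv.refl (Fin n)) :=
  concurrency_wall_crossing_general a1 a2 b c bt ct hA1 hA2 hiso s0 hbt hbt0 hct hct0
end

section
/- Let 𝔽 be an ordered field and let 𝒩_1, 𝒩_2 be two normal systems in 𝔽^3 with sets 𝒰_1, 𝒰_2 of antipodal pairs of vectors. For i = 1, 2 let G_i be the graph of compatible pairs of 𝒩_i. If δ : 𝒰_1 → 𝒰_2 is a convex positive bijection, then δ induces an isomorphism of graphs G_1 ≅ G_2 (sending the vertex {x, y} to {δ(x), δ(y)}). Conversely, if δ : 𝒰_1 → 𝒰_2 is a bijection with δ(−u) = −δ(u) for all u ∈ 𝒰_1 such that the induced map on vertices is an isomorphism of the graphs G_1 and G_2, then δ is a convex positive bijection. -/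
/-!
For pairwise distinct indices, the pairs `{x, y}` and `{z, t}` are compatible exactly when `x` is
a positive combination of the basis `{-y, z, t}`; this identity turns each of the two conditions
into the other. The remaining cases are degenerate on both sides: two distinct pairs sharing a
line are never compatible, and no element of a basis is a positive combination of that basis,
both by linear independence of at most three vectors of a normal system.

Replacing `w` by `w' i = η i • w (σ i)`, which is again normal, turns `δ` into
`ζ • v i ↦ ζ • w' i`, so everything is proved for that correspondence between two families.
-/

/-- `v` enumerates (one vector from each antipodal pair of) a normal system of
cardinality `n` in `F^m`: the vectors are nonzero, span pairwise distinct lines through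
the origin, and every subfamily of cardinality at most `m` is linearly independent. -/
def IsNormalFamily {F : Type*} [Field F] {m n : ℕ} (v : Fin n → Fin m → F) : Prop :=
  (∀ i, v i ≠ 0) ∧
  (∀ i j : Fin n, i ≠ j → Submodule.span F {v i} ≠ Submodule.span F {v j}) ∧
  (∀ T : Finset (Fin n), T.card ≤ m →
    LinearIndependent F (fun i : {x // x ∈ T} => v i.1))

/-- The map on the vertices of the graphs of compatible pairs induced by the
antipode-preserving bijection `δ (ζ • v i) = (ζ * η i) • w (σ i)` is an isomorphism of
graphs: two distinct vertices `{ζ1 • v i1, ξ1 • v j1}` and `{ζ2 • v i2, ξ2 • v j2}` are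
compatible (joined by an edge, i.e. some positive combinations of the two pairs agree)
if and only if their images are. -/
def InducesCompatGraphIso {F : Type*} [Field F] [LinearOrder F] [IsStrictOrderedRing F] {n : ℕ}
    (v w : Fin n → Fin 3 → F) (σ : Equiv.Perm (Fin n)) (η : Fin n → F) : Prop :=
  ∀ (i1 j1 i2 j2 : Fin n) (ζ1 ξ1 ζ2 ξ2 : F),
    (ζ1 = 1 ∨ ζ1 = -1) → (ξ1 = 1 ∨ ξ1 = -1) →
    (ζ2 = 1 ∨ ζ2 = -1) → (ξ2 = 1 ∨ ξ2 = -1) →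
    i1 ≠ j1 → i2 ≠ j2 →
    ({ζ1 • v i1, ξ1 • v j1} : Set (Fin 3 → F)) ≠ {ζ2 • v i2, ξ2 • v j2} →
    ((∃ p q r s : F, 0 < p ∧ 0 < q ∧ 0 < r ∧ 0 < s ∧
        p • (ζ1 • v i1) + q • (ξ1 • v j1) = r • (ζ2 • v i2) + s • (ξ2 • v j2)) ↔
      (∃ p q r s : F, 0 < p ∧ 0 < q ∧ 0 < r ∧ 0 < s ∧
        p • ((ζ1 * η i1) • w (σ i1)) + q • ((ξ1 * η j1) • w (σ j1)) =
          r • ((ζ2 * η i2) • w (σ i2)) + s • ((ξ2 * η j2) • w (σ j2))))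

open Finset

section Signs

variable {R : Type*} [CommRing R]

theorem ne_zero_of_eq_one_or_eq_neg_one [Nontrivial R] {a : R} (h : a = 1 ∨ a = -1) : a ≠ 0 := by
  rcases h with rfl | rfl <;> simp

theorem eq_of_pos_mul_eq_pos_mul [LinearOrder R] [IsStrictOrderedRing R] {a b p r : R}
    (ha : a = 1 ∨ a = -1) (hb : b = 1 ∨ b = -1) (hp : 0 < p) (hr : 0 < r) (h : p * a = r * b) :
    a = b := by
  rcases ha with rfl | rfl <;> rcases hb with rfl | rfl <;> simp only [mul_one, mul_neg_one] at h
    <;> first | rfl | (exfalso; linarith)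

end Signs

section LinearIndependence

variable {F M ι : Type*} [Field F] [AddCommGroup M] [Module F M] {f : ι → M}

theorem LinearIndepOn.smul_of_ne_zero {s : Set ι} (h : LinearIndepOn F f s) {c : ι → F}
    (hc : ∀ i, c i ≠ 0) : LinearIndepOn F (fun i => c i • f i) s :=
  h.units_smul fun i => Units.mk0 (c i) (hc i)

theorem LinearIndepOn.smul_ne_smul {i j : ι} (h : LinearIndepOn F f {i, j}) (hij : i ≠ j)
    {α : F} (hα : α ≠ 0) (β : F) : α • f i ≠ β • f j := fun he =>
  hα ((LinearIndepOn.pair_iff f hij).1 h α (-β) (by rw [he]; module)).1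

theorem LinearIndepOn.eq_zero_of_smul_add_smul_add_smul_eq_zero {a b c : ι}
    (h : LinearIndepOn F f {a, b, c}) (hab : a ≠ b) (hac : a ≠ c) (hbc : b ≠ c) {x y z : F}
    (hs : x • f a + y • f b + z • f c = 0) : x = 0 ∧ y = 0 ∧ z = 0 := by
  classical
  have := linearIndepOn_iff'.1 h {a, b, c} (Pi.single a x + Pi.single b y + Pi.single c z)
    (by simp) (by simp [sum_insert, hab, hac, hbc, hab.symm, hac.symm, hbc.symm, Pi.single_apply,
      add_smul, ← add_assoc, hs])
  simpa [Pi.single_apply, hab, hac, hbc, hab.symm, hac.symm, hbc.symm] using this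

end LinearIndependence

section Cones

variable (F : Type*) {M ι : Type*} [Field F] [LinearOrder F] [AddCommGroup M] [Module F M]

def Compatible (x y z t : M) : Prop :=
  ∃ p q r s : F, 0 < p ∧ 0 < q ∧ 0 < r ∧ 0 < s ∧ p • x + q • y = r • z + s • t

def IsPosComb (T : Finset ι) (f : ι → M) (x : M) : Prop :=
  ∃ c : ι → F, (∀ i ∈ T, 0 < c i) ∧ x = ∑ i ∈ T, c i • f i

variable {F} {x y z t : M}

theorem Compatible.swap_left (h : Compatible F x y z t) : Compatible F y x z t := by
  obtain ⟨p, q, r, s, hp, hq, hr, hs, h⟩ := h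
  exact ⟨q, p, r, s, hq, hp, hr, hs, by rw [add_comm, h]⟩

theorem Compatible.swap_right (h : Compatible F x y z t) : Compatible F x y t z := by
  obtain ⟨p, q, r, s, hp, hq, hr, hs, h⟩ := h
  exact ⟨p, q, s, r, hp, hq, hs, hr, by rw [add_comm (s • t), h]⟩

theorem compatible_iff_exists_pos [IsStrictOrderedRing F] :
    Compatible F x y z t ↔ ∃ a b c : F, 0 < a ∧ 0 < b ∧ 0 < c ∧ x = a • -y + b • z + c • t := by
  constructor
  · rintro ⟨p, q, r, s, hp, hq, hr, hs, h⟩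
    refine ⟨q / p, r / p, s / p, div_pos hq hp, div_pos hr hp, div_pos hs hp, ?_⟩
    linear_combination (norm := match_scalars <;> field_simp <;> ring) p⁻¹ • h
  · rintro ⟨a, b, c, ha, hb, hc, h⟩
    exact ⟨1, a, b, c, one_pos, ha, hb, hc, by rw [h]; module⟩

theorem isPosComb_triple_iff [DecidableEq ι] {f : ι → M} {a b c : ι} (hab : a ≠ b) (hac : a ≠ c)
    (hbc : b ≠ c) :
    IsPosComb F {a, b, c} f x ↔
      ∃ p q r : F, 0 < p ∧ 0 < q ∧ 0 < r ∧ x = p • f a + q • f b + r • f c := by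
  simp only [IsPosComb, sum_insert (show a ∉ ({b, c} : Finset ι) by simp [hab, hac]),
    sum_insert (show b ∉ ({c} : Finset ι) by simp [hbc]), sum_singleton,
    forall_mem_insert, mem_singleton, forall_eq, ← add_assoc]
  constructor
  · rintro ⟨d, ⟨ha, hb, hc⟩, h⟩
    exact ⟨d a, d b, d c, ha, hb, hc, h⟩
  · rintro ⟨p, q, r, hp, hq, hr, h⟩
    refine ⟨fun i => if i = a then p else if i = b then q else r, ?_, ?_⟩ <;>
      simp [hab.symm, hac.symm, hbc.symm, hp, hq, hr, h]

theorem compatible_iff_isPosComb [IsStrictOrderedRing F] [DecidableEq ι] {f : ι → M} {a b c : ι}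
    (hab : a ≠ b) (hac : a ≠ c) (hbc : b ≠ c) (ha : f a = -y) (hb : f b = z) (hc : f c = t) :
    Compatible F x y z t ↔ IsPosComb F {a, b, c} f x := by
  rw [isPosComb_triple_iff hab hac hbc, ha, hb, hc, compatible_iff_exists_pos]

theorem not_isPosComb_of_mem_span_singleton {T : Finset ι} (h : LinearIndepOn F f T) {j k : ι}
    (hj : j ∈ T) (hk : k ∈ T) (hjk : j ≠ k) {x : M} (hx : x ∈ F ∙ f k) : ¬IsPosComb F T f x := by
  classical
  rintro ⟨c, hc, rfl⟩
  obtain ⟨e, he⟩ := Submodule.mem_span_singleton.1 hx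
  have := linearIndepOn_iff'.1 h T (c - Pi.single k e) subset_rfl
    (by simp [sub_smul, sum_sub_distrib, Pi.single_apply, ite_smul, hk, he]) j hj
  simp only [Pi.sub_apply, Pi.single_apply, hjk, if_false, sub_zero] at this
  exact (hc j hj).ne' this

end Cones

section Degenerate

variable {F M ι : Type*} [Field F] [LinearOrder F] [IsStrictOrderedRing F] [AddCommGroup M]
  [Module F M] {f : ι → M}

theorem not_compatible_of_linearIndepOn {a b c : ι} (h : LinearIndepOn F f {a, b, c})
    (hab : a ≠ b) (hac : a ≠ c) (hbc : b ≠ c) {β : F} (hβ : β ≠ 0) (α γ δ : F) :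
    ¬Compatible F (α • f a) (β • f b) (γ • f a) (δ • f c) := by
  rintro ⟨p, q, r, s, -, hq, -, -, he⟩
  have := (h.eq_zero_of_smul_add_smul_add_smul_eq_zero hab hac hbc (x := p * α - r * γ)
    (y := q * β) (z := -(s * δ)) (by linear_combination (norm := module) he)).2.1
  exact mul_ne_zero hq.ne' hβ this

theorem Compatible.signs_eq {a b : ι} (h : LinearIndepOn F f {a, b}) (hab : a ≠ b)
    {α β γ δ : F} (hα : α = 1 ∨ α = -1) (hβ : β = 1 ∨ β = -1) (hγ : γ = 1 ∨ γ = -1)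
    (hδ : δ = 1 ∨ δ = -1) (hc : Compatible F (α • f a) (β • f b) (γ • f a) (δ • f b)) :
    α = γ ∧ β = δ := by
  obtain ⟨p, q, r, s, hp, hq, hr, hs, he⟩ := hc
  obtain ⟨h1, h2⟩ := (LinearIndepOn.pair_iff f hab).1 h (p * α - r * γ) (q * β - s * δ)
    (by linear_combination (norm := module) he)
  exact ⟨eq_of_pos_mul_eq_pos_mul hα hγ hp hr (sub_eq_zero.1 h1),
    eq_of_pos_mul_eq_pos_mul hβ hδ hq hs (sub_eq_zero.1 h2)⟩

theorem not_compatible_of_fst_eq (hf : ∀ T : Finset ι, #T ≤ 3 → LinearIndepOn F f T)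
    {ζ1 ξ1 ζ2 ξ2 : F} (hζ1 : ζ1 = 1 ∨ ζ1 = -1) (hξ1 : ξ1 = 1 ∨ ξ1 = -1) (hζ2 : ζ2 = 1 ∨ ζ2 = -1)
    (hξ2 : ξ2 = 1 ∨ ξ2 = -1) {i j1 j2 : ι} (hj1 : i ≠ j1) (hj2 : i ≠ j2)
    (hne : ({(ζ1, i), (ξ1, j1)} : Set (F × ι)) ≠ {(ζ2, i), (ξ2, j2)}) :
    ¬Compatible F (ζ1 • f i) (ξ1 • f j1) (ζ2 • f i) (ξ2 • f j2) := by
  classical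
  intro hc
  by_cases hj : j1 = j2
  · subst hj
    obtain ⟨rfl, rfl⟩ := hc.signs_eq (by simpa using hf {i, j1} (card_le_two.trans (by norm_num)))
      hj1 hζ1 hξ1 hζ2 hξ2
    exact hne rfl
  · exact not_compatible_of_linearIndepOn (by simpa using hf {i, j1, j2} card_le_three) hj1 hj2 hj
      (ne_zero_of_eq_one_or_eq_neg_one hξ1) _ _ _ hc

theorem not_compatible_of_overlap (hf : ∀ T : Finset ι, #T ≤ 3 → LinearIndepOn F f T)
    {ζ1 ξ1 ζ2 ξ2 : F} (hζ1 : ζ1 = 1 ∨ ζ1 = -1) (hξ1 : ξ1 = 1 ∨ ξ1 = -1) (hζ2 : ζ2 = 1 ∨ ζ2 = -1)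
    (hξ2 : ξ2 = 1 ∨ ξ2 = -1) {i1 j1 i2 j2 : ι}
    (hij1 : i1 ≠ j1) (hij2 : i2 ≠ j2)
    (hover : i1 = i2 ∨ i1 = j2 ∨ j1 = i2 ∨ j1 = j2)
    (hne : ({(ζ1, i1), (ξ1, j1)} : Set (F × ι)) ≠ {(ζ2, i2), (ξ2, j2)}) :
    ¬Compatible F (ζ1 • f i1) (ξ1 • f j1) (ζ2 • f i2) (ξ2 • f j2) := by
  rcases hover with rfl | rfl | rfl | rfl
  · exact not_compatible_of_fst_eq hf hζ1 hξ1 hζ2 hξ2 hij1 hij2 hne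
  · rw [Set.pair_comm (ζ2, i2)] at hne
    exact fun hc => not_compatible_of_fst_eq hf hζ1 hξ1 hξ2 hζ2 hij1 hij2.symm hne hc.swap_right
  · rw [Set.pair_comm (ζ1, i1)] at hne
    exact fun hc => not_compatible_of_fst_eq hf hξ1 hζ1 hζ2 hξ2 hij1.symm hij2 hne hc.swap_left
  · rw [Set.pair_comm (ζ1, i1), Set.pair_comm (ζ2, i2)] at hne
    exact fun hc => not_compatible_of_fst_eq hf hξ1 hζ1 hξ2 hζ2 hij1.symm hij2.symm hne
      hc.swap_left.swap_right

end Degenerate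

section Correspondence

variable (F : Type*) {M ι : Type*} [Field F] [LinearOrder F] [AddCommGroup M] [Module F M]

/-- `IsCPB` with `σ = 1` and `η = 1`, i.e. for the bijection `ζ • u i ↦ ζ • u' i`. -/
def IsConvexPositive (u u' : ι → M) : Prop :=
  ∀ T : Finset ι, #T = 3 → ∀ ζ : ι → F, (∀ i, ζ i = 1 ∨ ζ i = -1) →
    LinearIndepOn F (fun i => ζ i • u i) T → ∀ (k : ι) (ξ : F), ξ = 1 ∨ ξ = -1 →
      (IsPosComb F T (fun i => ζ i • u i) (ξ • u k) ↔
        IsPosComb F T (fun i => ζ i • u' i) (ξ • u' k))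

/-- `InducesCompatGraphIso` with `σ = 1` and `η = 1`. -/
def PreservesCompatibility (u u' : ι → M) : Prop :=
  ∀ (i1 j1 i2 j2 : ι) (ζ1 ξ1 ζ2 ξ2 : F),
    (ζ1 = 1 ∨ ζ1 = -1) → (ξ1 = 1 ∨ ξ1 = -1) → (ζ2 = 1 ∨ ζ2 = -1) → (ξ2 = 1 ∨ ξ2 = -1) →
    i1 ≠ j1 → i2 ≠ j2 → ({ζ1 • u i1, ξ1 • u j1} : Set M) ≠ {ζ2 • u i2, ξ2 • u j2} →
    (Compatible F (ζ1 • u i1) (ξ1 • u j1) (ζ2 • u i2) (ξ2 • u j2) ↔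
      Compatible F (ζ1 • u' i1) (ξ1 • u' j1) (ζ2 • u' i2) (ξ2 • u' j2))

variable {F} [IsStrictOrderedRing F] {u u' : ι → M}

theorem IsConvexPositive.preservesCompatibility
    (hu : ∀ T : Finset ι, #T ≤ 3 → LinearIndepOn F u T)
    (hu' : ∀ T : Finset ι, #T ≤ 3 → LinearIndepOn F u' T) (h : IsConvexPositive F u u') :
    PreservesCompatibility F u u' := by
  classical
  intro i1 j1 i2 j2 ζ1 ξ1 ζ2 ξ2 hζ1 hξ1 hζ2 hξ2 hij1 hij2 hne
  by_cases hover : i1 = i2 ∨ i1 = j2 ∨ j1 = i2 ∨ j1 = j2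
  · have hne' : ({(ζ1, i1), (ξ1, j1)} : Set (F × ι)) ≠ {(ζ2, i2), (ξ2, j2)} := fun he =>
      hne (by simpa [Set.image_pair] using congrArg (Set.image fun p : F × ι => p.1 • u p.2) he)
    exact iff_of_false (not_compatible_of_overlap hu hζ1 hξ1 hζ2 hξ2 hij1 hij2 hover hne')
      (not_compatible_of_overlap hu' hζ1 hξ1 hζ2 hξ2 hij1 hij2 hover hne')
  obtain ⟨-, -, hj1i2, hj1j2⟩ : i1 ≠ i2 ∧ i1 ≠ j2 ∧ j1 ≠ i2 ∧ j1 ≠ j2 := by tauto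
  let ζ : ι → F := fun i => if i = j1 then -ξ1 else if i = i2 then ζ2 else ξ2
  have hζ : ∀ i, ζ i = 1 ∨ ζ i = -1 := by
    intro i
    simp only [ζ]
    split_ifs
    exacts [by rcases hξ1 with h | h <;> simp [h], hζ2, hξ2]
  have hcomb (g : ι → M) : Compatible F (ζ1 • g i1) (ξ1 • g j1) (ζ2 • g i2) (ξ2 • g j2) ↔
      IsPosComb F {j1, i2, j2} (fun i => ζ i • g i) (ζ1 • g i1) :=
    compatible_iff_isPosComb hj1i2 hj1j2 hij2 (by simp [ζ, neg_smul]) (by simp [ζ, hj1i2.symm])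
      (by simp [ζ, hj1j2.symm, hij2.symm])
  rw [hcomb u, hcomb u']
  exact h _ (card_eq_three.2 ⟨j1, i2, j2, hj1i2, hj1j2, hij2, rfl⟩) ζ hζ
    ((hu _ card_le_three).smul_of_ne_zero fun i => ne_zero_of_eq_one_or_eq_neg_one (hζ i))
    i1 ζ1 hζ1

theorem PreservesCompatibility.isConvexPositive
    (hu : ∀ T : Finset ι, #T ≤ 3 → LinearIndepOn F u T)
    (hu' : ∀ T : Finset ι, #T ≤ 3 → LinearIndepOn F u' T) (h : PreservesCompatibility F u u') :
    IsConvexPositive F u u' := by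
  classical
  intro T hT ζ hζ hind k ξ hξ
  have hζ0 i : ζ i ≠ 0 := ne_zero_of_eq_one_or_eq_neg_one (hζ i)
  by_cases hk : k ∈ T
  · obtain ⟨j, hj, hjk⟩ := T.exists_mem_ne (by omega) k
    have hspan (g : ι → M) : ξ • g k ∈ F ∙ (ζ k • g k) := by
      rw [Submodule.span_singleton_smul_eq (hζ0 k).isUnit]
      exact Submodule.smul_mem _ _ (Submodule.mem_span_singleton_self _)
    exact iff_of_false (not_isPosComb_of_mem_span_singleton hind hj hk hjk (hspan u))
      (not_isPosComb_of_mem_span_singleton ((hu' T hT.le).smul_of_ne_zero hζ0) hj hk hjk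
        (hspan u'))
  obtain ⟨a, b, c, hab, hac, hbc, rfl⟩ := card_eq_three.1 hT
  simp only [mem_insert, mem_singleton, not_or] at hk
  obtain ⟨hka, hkb, hkc⟩ := hk
  have hcomb (g : ι → M) : IsPosComb F {a, b, c} (fun i => ζ i • g i) (ξ • g k) ↔
      Compatible F (ξ • g k) (-ζ a • g a) (ζ b • g b) (ζ c • g c) :=
    (compatible_iff_isPosComb hab hac hbc (by simp [neg_smul]) rfl rfl).symm
  have hne : ({ξ • u k, -ζ a • u a} : Set M) ≠ {ζ b • u b, ζ c • u c} := by
    intro he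
    have hξ0 := ne_zero_of_eq_one_or_eq_neg_one hξ
    rcases he ▸ Set.mem_insert (ξ • u k) {-ζ a • u a} with he | he
    · exact (by simpa using hu {k, b} (card_le_two.trans (by norm_num)) :
        LinearIndepOn F u {k, b}).smul_ne_smul hkb hξ0 _ he
    · exact (by simpa using hu {k, c} (card_le_two.trans (by norm_num)) :
        LinearIndepOn F u {k, c}).smul_ne_smul hkc hξ0 _ he
  rw [hcomb u, hcomb u']
  exact h k a b c ξ (-ζ a) (ζ b) (ζ c) hξ (by rcases hζ a with h | h <;> simp [h]) (hζ b) (hζ c)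
    hka hbc hne

end Correspondence

theorem IsNormalFamily.linearIndepOn_smul_comp {F : Type*} [Field F] {m n : ℕ}
    {w : Fin n → Fin m → F} (hw : IsNormalFamily w) (σ : Equiv.Perm (Fin n)) {η : Fin n → F}
    (hη : ∀ i, η i ≠ 0) {T : Finset (Fin n)} (hT : #T ≤ m) :
    LinearIndepOn F (fun i => η i • w (σ i)) T := by
  have h : LinearIndepOn F w ↑(T.map σ.toEmbedding) := hw.2.2 _ (by simpa)
  rw [coe_map] at h
  exact (h.comp_of_image σ.injective.injOn).smul_of_ne_zero hη

/-- **Theorem (graphs of compatible pairs in dimension three).** For two normal systems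
in `F^3`, a convex positive bijection between their sets of antipodal pairs induces an
isomorphism of the associated graphs of compatible pairs; conversely, an
antipode-preserving bijection inducing an isomorphism of the graphs of compatible pairs
is a convex positive bijection. -/
theorem graph_of_compatible_pairs {F : Type*} [Field F] [LinearOrder F] [IsStrictOrderedRing F] {n : ℕ}
    (v w : Fin n → Fin 3 → F) (hv : IsNormalFamily v) (hw : IsNormalFamily w)
    (σ : Equiv.Perm (Fin n)) (η : Fin n → F) (hη : ∀ i, η i = 1 ∨ η i = -1) :
    (IsCPB v w σ η → InducesCompatGraphIso v w σ η) ∧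
    (InducesCompatGraphIso v w σ η → IsCPB v w σ η) := by
  have hv3 : ∀ T : Finset (Fin n), #T ≤ 3 → LinearIndepOn F v T := hv.2.2
  have hw3 : ∀ T : Finset (Fin n), #T ≤ 3 → LinearIndepOn F (fun i => η i • w (σ i)) T :=
    fun T => hw.linearIndepOn_smul_comp σ fun i => ne_zero_of_eq_one_or_eq_neg_one (hη i)
  simp only [IsCPB, InducesCompatGraphIso, mul_smul]
  exact ⟨fun h => IsConvexPositive.preservesCompatibility hv3 hw3 h.2,
    fun h => ⟨hη, PreservesCompatibility.isConvexPositive hv3 hw3 h⟩⟩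
end

section
/- In ℚ^3 let u_1 = (1,0,0), u_2 = (0,1,0), u_3 = (0,0,1), u_4 = (1,2,2), u_5 = (1,4,8), u_6 = (6,6,7), and let v_i = u_i for 1 ≤ i ≤ 5 and v_6 = (2,6,9). Then each of {u_1, …, u_6} and {v_1, …, v_6} has every subset of cardinality at most 3 linearly independent (so the sets 𝒰_1 = {±u_1, …, ±u_6} and 𝒰_2 = {±v_1, …, ±v_6} are sets of antipodal pairs of vectors of normal systems of cardinality 6 in ℚ^3), and there exists no convex positive bijection from 𝒰_1 to 𝒰_2; hence these two normal systems are not isomorphic. In particular, not all normal systems of the same cardinality in dimension three are isomorphic. -/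
/-- The vectors `u₁, …, u₆` spanning the first normal system `𝒩₁` in `ℚ³`. -/
def uVecs : Fin 6 → Fin 3 → ℚ :=
  ![![1, 0, 0], ![0, 1, 0], ![0, 0, 1], ![1, 2, 2], ![1, 4, 8], ![6, 6, 7]]

/-- The vectors `v₁, …, v₆` spanning the second normal system `𝒩₂` in `ℚ³`; only the
last vector differs from `uVecs`. -/
def vVecs : Fin 6 → Fin 3 → ℚ :=
  ![![1, 0, 0], ![0, 1, 0], ![0, 0, 1], ![1, 2, 2], ![1, 4, 8], ![2, 6, 9]]

open Finset

section Determinant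

variable {R : Type*} [CommRing R]

def det3 (x y z : Fin 3 → R) : R :=
  x 0 * (y 1 * z 2 - y 2 * z 1) - x 1 * (y 0 * z 2 - y 2 * z 0) + x 2 * (y 0 * z 1 - y 1 * z 0)

theorem det3_eq_det (x y z : Fin 3 → R) : det3 x y z = (Matrix.of ![x, y, z]).det := by
  simp only [det3, Matrix.det_fin_three, Matrix.of_apply, Matrix.cons_val_zero,
    Matrix.cons_val_one, Matrix.cons_val]
  ring

theorem det3_smul (p q r : R) (x y z : Fin 3 → R) :
    det3 (p • x) (q • y) (r • z) = p * q * r * det3 x y z := by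
  simp only [det3, Pi.smul_apply, smul_eq_mul]
  ring

theorem det3_smul_left (t : R) (x y z : Fin 3 → R) : det3 (t • x) y z = t * det3 x y z := by
  simpa using det3_smul t 1 1 x y z

theorem Finset.sum_triple {ι M : Type*} [DecidableEq ι] [AddCommMonoid M] {a b c : ι}
    (hab : a ≠ b) (hac : a ≠ c) (hbc : b ≠ c) (f : ι → M) :
    ∑ i ∈ {a, b, c}, f i = f a + f b + f c := by
  rw [sum_insert (by simp [hab, hac]), sum_pair hbc, add_assoc]

theorem det3_sum_triple_left {ι : Type*} [DecidableEq ι] {a b c : ι}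
    (hab : a ≠ b) (hac : a ≠ c) (hbc : b ≠ c) (coef : ι → R) (y : ι → Fin 3 → R) :
    det3 (∑ i ∈ {a, b, c}, coef i • y i) (y b) (y c) = coef a * det3 (y a) (y b) (y c) := by
  rw [sum_triple hab hac hbc]
  simp only [det3, Pi.add_apply, Pi.smul_apply, smul_eq_mul]
  ring

/-- Negative exactly when the plane spanned by `w b` and `w c` strictly separates `w x`
from `w y`. -/
def sideProduct {ι : Type*} (w : ι → Fin 3 → R) (x y b c : ι) : R :=
  det3 (w x) (w b) (w c) * det3 (w y) (w b) (w c)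

/-- With `s = -1` these are the planes separating `w x` from `w y`. A plane is recorded as an
ordered pair of indices, so each one is counted twice. -/
def planesBySideSign {ι : Type*} [Fintype ι] [DecidableEq ι] [LinearOrder R]
    (w : ι → Fin 3 → R) (x y : ι) (s : SignType) : Finset (ι × ι) :=
  ({x, y}ᶜ : Finset ι).offDiag.filter fun p => SignType.sign (sideProduct w x y p.1 p.2) = s

theorem mem_planesBySideSign {ι : Type*} [Fintype ι] [DecidableEq ι] [LinearOrder R]
    {w : ι → Fin 3 → R} {x y : ι} {s : SignType} {p : ι × ι} :
    p ∈ planesBySideSign w x y s ↔ p.1 ≠ x ∧ p.1 ≠ y ∧ p.2 ≠ x ∧ p.2 ≠ y ∧ p.1 ≠ p.2 ∧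
      SignType.sign (sideProduct w x y p.1 p.2) = s := by
  simp only [planesBySideSign, mem_filter, mem_offDiag, mem_compl, mem_insert, mem_singleton]
  tauto

end Determinant

section Field

variable {F : Type*} [Field F]

theorem linearIndependent_vec3_iff_det3_ne_zero (x y z : Fin 3 → F) :
    LinearIndependent F ![x, y, z] ↔ det3 x y z ≠ 0 := by
  rw [det3_eq_det, ← isUnit_iff_ne_zero, ← Matrix.isUnit_iff_isUnit_det,
    ← Matrix.linearIndependent_rows_iff_isUnit]
  rfl

theorem linearIndepOn_triple_iff {ι : Type*} {v : ι → Fin 3 → F} {a b c : ι}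
    (hab : a ≠ b) (hac : a ≠ c) (hbc : b ≠ c) :
    LinearIndepOn F v {a, b, c} ↔ det3 (v a) (v b) (v c) ≠ 0 := by
  have hinj : Function.Injective ![a, b, c] := by
    intro i j
    fin_cases i <;> fin_cases j <;> simp [hab, hac, hbc, hab.symm, hac.symm, hbc.symm]
  have hrange : Set.range ![a, b, c] = {a, b, c} := by
    rw [Matrix.range_cons, Matrix.range_cons_cons_empty, Set.singleton_union]
  rw [← linearIndependent_vec3_iff_det3_ne_zero, ← hrange, linearIndepOn_range_iff hinj]
  convert Iff.rfl using 2
  ext i : 1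
  fin_cases i <;> rfl

theorem eq_cramer {a b c : Fin 3 → F} (hD : det3 a b c ≠ 0) (x : Fin 3 → F) :
    x = (det3 x b c / det3 a b c) • a + (det3 a x c / det3 a b c) • b +
      (det3 a b x / det3 a b c) • c := by
  funext i
  simp only [Pi.add_apply, Pi.smul_apply, smul_eq_mul]
  field_simp
  fin_cases i <;> simp only [Fin.zero_eta, Fin.mk_one, Fin.reduceFinMk, det3] <;> ring

theorem IsNormalFamily.det3_ne_zero {n : ℕ} {v : Fin n → Fin 3 → F} (hv : IsNormalFamily v)
    {a b c : Fin n} (hab : a ≠ b) (hac : a ≠ c) (hbc : b ≠ c) :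
    det3 (v a) (v b) (v c) ≠ 0 := by
  have h : LinearIndepOn F v (({a, b, c} : Finset (Fin n)) : Set (Fin n)) :=
    hv.2.2 _ card_le_three
  rw [coe_insert, coe_pair] at h
  exact (linearIndepOn_triple_iff hab hac hbc).1 h

theorem isNormalFamily_of_det3_ne_zero {n : ℕ} {v : Fin n → Fin 3 → F} (hn : 3 ≤ n)
    (hv : ∀ a b c, a ≠ b → a ≠ c → b ≠ c → det3 (v a) (v b) (v c) ≠ 0) :
    IsNormalFamily v := by
  have hli : ∀ T : Finset (Fin n), #T ≤ 3 → LinearIndepOn F v T := by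
    intro T hT
    obtain ⟨S, hTS, hS⟩ := exists_superset_card_eq hT (by simpa using hn)
    obtain ⟨a, b, c, hab, hac, hbc, rfl⟩ := card_eq_three.1 hS
    have habc : LinearIndepOn F v {a, b, c} :=
      (linearIndepOn_triple_iff hab hac hbc).2 (hv a b c hab hac hbc)
    exact habc.mono (by simpa using coe_subset.2 hTS)
  have hne : ∀ i, v i ≠ 0 := fun i =>
    (linearIndepOn_singleton_iff F).1 (by simpa using hli {i} (by simp))
  refine ⟨hne, fun i j hij hspan => ?_, hli⟩
  have hpair : LinearIndepOn F v {i, j} := by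
    simpa using hli {i, j} (card_le_two.trans (by norm_num))
  obtain ⟨t, ht⟩ :=
    Submodule.mem_span_singleton.1 (hspan ▸ Submodule.mem_span_singleton_self (v j))
  exact (linearIndepOn_pair_iff v hij (hne i)).1 hpair t ht

end Field

section Ordered

variable {F ι : Type*} [Field F] [LinearOrder F] [IsStrictOrderedRing F]

theorem exists_signs_pos_combination [DecidableEq ι] {y : ι → Fin 3 → F}
    {a b c : ι} (hab : a ≠ b) (hac : a ≠ c) (hbc : b ≠ c) (hD : det3 (y a) (y b) (y c) ≠ 0)
    {x : Fin 3 → F} (ha : det3 x (y b) (y c) ≠ 0) (hb : det3 (y a) x (y c) ≠ 0)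
    (hc : det3 (y a) (y b) x ≠ 0) :
    ∃ ζ : ι → F, (∀ i, ζ i = 1 ∨ ζ i = -1) ∧
      ∃ coef : ι → F, (∀ i ∈ ({a, b, c} : Finset ι), 0 < coef i) ∧
        x = ∑ i ∈ {a, b, c}, coef i • (ζ i • y i) := by
  set D := det3 (y a) (y b) (y c)
  let coord : ι → F := fun i =>
    if i = a then det3 x (y b) (y c) / D else if i = b then det3 (y a) x (y c) / D
    else det3 (y a) (y b) x / D
  have hcoord : ∀ i ∈ ({a, b, c} : Finset ι), coord i ≠ 0 := by
    simp only [mem_insert, mem_singleton]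
    rintro i (rfl | rfl | rfl) <;> simp [coord, hab.symm, hac.symm, hbc.symm, *]
  refine ⟨fun i => if 0 ≤ coord i then 1 else -1, fun i => ite_eq_or_eq _ _ _,
    fun i => |coord i|, fun i hi => abs_pos.2 (hcoord i hi), ?_⟩
  have habs : ∀ i, |coord i| • (if 0 ≤ coord i then (1 : F) else -1) • y i = coord i • y i := by
    intro i
    rw [smul_smul]
    split_ifs with h
    · rw [abs_of_nonneg h, mul_one]
    · rw [abs_of_neg (not_le.1 h), neg_mul_neg, mul_one]
  simp only [habs, sum_triple hab hac hbc]
  simpa [coord, hab.symm, hac.symm, hbc.symm] using eq_cramer hD x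

variable {n : ℕ} {v w : Fin n → Fin 3 → F} {σ : Equiv.Perm (Fin n)} {η : Fin n → F}

theorem IsCPB.sideProduct_mul_sideProduct_pos (hv : IsNormalFamily v) (hw : IsNormalFamily w)
    (h : IsCPB v w σ η) {a b c k : Fin n} (hab : a ≠ b) (hac : a ≠ c) (hbc : b ≠ c)
    (hka : k ≠ a) (hkb : k ≠ b) (hkc : k ≠ c) :
    0 < η k * η a * sideProduct v k a b c * sideProduct w (σ k) (σ a) (σ b) (σ c) := by
  obtain ⟨hη, hcpb⟩ := h
  set D := det3 (v a) (v b) (v c)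
  set Dw := det3 (w (σ a)) (w (σ b)) (w (σ c))
  have hD : D ≠ 0 := hv.det3_ne_zero hab hac hbc
  have hDw : Dw ≠ 0 :=
    hw.det3_ne_zero (σ.injective.ne hab) (σ.injective.ne hac) (σ.injective.ne hbc)
  obtain ⟨ζ, hζ, coef, hcoef, hk⟩ := exists_signs_pos_combination hab hac hbc hD
    (hv.det3_ne_zero hkb hkc hbc) (hv.det3_ne_zero hka.symm hac hkc)
    (hv.det3_ne_zero hab hka.symm hkb.symm)
  have hli : LinearIndepOn F (fun i => ζ i • v i)
      (({a, b, c} : Finset (Fin n)) : Set (Fin n)) := by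
    rw [coe_insert, coe_pair, linearIndepOn_triple_iff hab hac hbc, det3_smul]
    have hζ0 : ∀ i, ζ i ≠ 0 := fun i => by rcases hζ i with h | h <;> simp [h]
    exact mul_ne_zero (mul_ne_zero (mul_ne_zero (hζ0 a) (hζ0 b)) (hζ0 c)) hD
  obtain ⟨coef', hcoef', hσk⟩ := (hcpb {a, b, c} (card_eq_three.2 ⟨a, b, c, hab, hac, hbc, rfl⟩)
    ζ hζ hli k 1 (Or.inl rfl)).1 ⟨coef, hcoef, by rwa [one_smul]⟩
  rw [one_mul] at hσk
  simp_rw [smul_smul] at hk hσk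
  have hu := congrArg (det3 · (v b) (v c)) hk
  have hw' := congrArg (det3 · (w (σ b)) (w (σ c))) hσk
  simp only [det3_sum_triple_left hab hac hbc (fun i => coef' i * (ζ i * η i)),
    det3_sum_triple_left hab hac hbc, det3_smul_left] at hu hw'
  have hsq : ∀ s : F, s = 1 ∨ s = -1 → s ^ 2 = 1 := fun s hs => sq_eq_one_iff.2 hs
  have hXw : det3 (w (σ k)) (w (σ b)) (w (σ c)) = η k * (coef' a * (ζ a * η a) * Dw) := by
    rw [← hw', ← mul_assoc, ← sq, hsq _ (hη k), one_mul]
  have hprod : η k * η a * sideProduct v k a b c * sideProduct w (σ k) (σ a) (σ b) (σ c) =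
      coef a * coef' a * (D * Dw) ^ 2 := by
    rw [sideProduct, sideProduct, hu, hXw]
    linear_combination (coef a * coef' a * (D * Dw) ^ 2) *
      (η a ^ 2 * ζ a ^ 2 * hsq _ (hη k) + ζ a ^ 2 * hsq _ (hη a) + hsq _ (hζ a))
  rw [hprod]
  have := hcoef a (by simp)
  have := hcoef' a (by simp)
  have := mul_ne_zero hD hDw
  positivity

theorem IsCPB.sign_sideProduct (hv : IsNormalFamily v) (hw : IsNormalFamily w)
    (h : IsCPB v w σ η) {a b c k : Fin n} (hab : a ≠ b) (hac : a ≠ c) (hbc : b ≠ c)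
    (hka : k ≠ a) (hkb : k ≠ b) (hkc : k ≠ c) :
    SignType.sign (sideProduct w (σ k) (σ a) (σ b) (σ c)) =
      SignType.sign (η k * η a) * SignType.sign (sideProduct v k a b c) := by
  have hpos := sign_pos (h.sideProduct_mul_sideProduct_pos hv hw hab hac hbc hka hkb hkc)
  rw [sign_mul, sign_mul (η k * η a)] at hpos
  generalize SignType.sign (η k * η a) = e at hpos ⊢
  generalize SignType.sign (sideProduct v k a b c) = s at hpos ⊢
  generalize SignType.sign (sideProduct w (σ k) (σ a) (σ b) (σ c)) = t at hpos ⊢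
  revert e s t
  decide

theorem IsCPB.card_planesBySideSign (hv : IsNormalFamily v) (hw : IsNormalFamily w)
    (h : IsCPB v w σ η) {a k : Fin n} (hka : k ≠ a) (s : SignType) :
    #(planesBySideSign w (σ k) (σ a) (SignType.sign (η k * η a) * s)) =
      #(planesBySideSign v k a s) := by
  have he : SignType.sign (η k * η a) ≠ 0 := by
    rcases h.1 k with h1 | h1 <;> rcases h.1 a with h2 | h2 <;> simp [h1, h2]
  refine (card_nbij' (Prod.map σ σ) (Prod.map σ.symm σ.symm) ?_ ?_ ?_ ?_).symm
  · rintro ⟨b, c⟩ hp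
    simp only [mem_coe, mem_planesBySideSign, Prod.map] at hp ⊢
    obtain ⟨hbk, hba, hck, hca, hbc, hs⟩ := hp
    refine ⟨σ.injective.ne hbk, σ.injective.ne hba, σ.injective.ne hck, σ.injective.ne hca,
      σ.injective.ne hbc, ?_⟩
    rw [h.sign_sideProduct hv hw hba.symm hca.symm hbc hka hbk.symm hck.symm, hs]
  · rintro ⟨b, c⟩ hp
    obtain ⟨b, rfl⟩ := σ.surjective b
    obtain ⟨c, rfl⟩ := σ.surjective c
    simp only [mem_coe, mem_planesBySideSign, Prod.map, Equiv.symm_apply_apply,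
      σ.injective.ne_iff] at hp ⊢
    obtain ⟨hbk, hba, hck, hca, hbc, hs⟩ := hp
    rw [h.sign_sideProduct hv hw hba.symm hca.symm hbc hka hbk.symm hck.symm] at hs
    exact ⟨hbk, hba, hck, hca, hbc, mul_left_cancel₀ he hs⟩
  · rintro ⟨b, c⟩ -
    simp
  · rintro ⟨b, c⟩ -
    simp

end Ordered

/-- **Two non-isomorphic normal systems of cardinality six in dimension three.**  Both
families `uVecs` and `vVecs` are normal families (every subset of cardinality at most
`3` is linearly independent), but there is no convex positive bijection from
`𝒰₁ = {± uVecs i}` to `𝒰₂ = {± vVecs i}`; hence the two normal systems are not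
isomorphic, and in particular not all normal systems of the same cardinality in
dimension three are isomorphic. -/
theorem nonisomorphic_normal_systems_dim_three :
    IsNormalFamily uVecs ∧ IsNormalFamily vVecs ∧
    ¬ ∃ (σ : Equiv.Perm (Fin 6)) (η : Fin 6 → ℚ), IsCPB uVecs vVecs σ η := by
  have hu : IsNormalFamily uVecs :=
    isNormalFamily_of_det3_ne_zero (by norm_num) (by decide +kernel)
  have hv : IsNormalFamily vVecs :=
    isNormalFamily_of_det3_ne_zero (by norm_num) (by decide +kernel)
  refine ⟨hu, hv, ?_⟩
  rintro ⟨σ, η, h⟩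
  have hsep : #(planesBySideSign uVecs 1 0 (-1)) = 10 := by decide +kernel
  have hnonsep : #(planesBySideSign uVecs 1 0 1) = 2 := by decide +kernel
  have hpairs : ∀ x y : Fin 6, x ≠ y →
      #(planesBySideSign vVecs x y (-1)) ≠ 10 ∧ #(planesBySideSign vVecs x y (-1)) ≠ 2 := by
    decide +kernel
  obtain ⟨hne10, hne2⟩ := hpairs (σ 1) (σ 0) (σ.injective.ne (by decide))
  have hcard := h.card_planesBySideSign hu hv (k := 1) (a := 0) (by decide)
  have hε : SignType.sign (η 1 * η 0) = 1 ∨ SignType.sign (η 1 * η 0) = -1 := by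
    rcases h.1 1 with h1 | h1 <;> rcases h.1 0 with h0 | h0 <;> simp [h1, h0]
  rcases hε with hε | hε
  · exact hne10 (by simpa [hε, hsep] using hcard (-1))
  · exact hne2 (by simpa [hε, hnonsep] using hcard 1)
end

section
/- (Zariski connectedness of positive dimensional skeletons.) Let 𝔽 be an infinite field and let (ℋ_n^m) = {H_1, …, H_n} be a hyperplane arrangement in 𝔽^m in general position. Then for every k with 1 ≤ k ≤ m − 1, the skeleton S_k of k-dimensional planes of the arrangement, namely the union over all (m−k)-element subsets {i_1 < … < i_{m−k}} of {1, …, n} of the affine subspaces H_{i_1} ∩ … ∩ H_{i_{m−k}}, is a connected subset of 𝔽^m in the Zariski topology. -/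
open Finset

/-- The Zariski topology on the affine space `F^m`: the topology whose closed sets are
exactly the common zero loci of sets of polynomials in `m` variables over `F`. -/
def zariski (F : Type*) [CommRing F] (m : ℕ) : TopologicalSpace (Fin m → F) :=
  TopologicalSpace.generateFrom
    {U | ∃ S : Set (MvPolynomial (Fin m) F),
      U = {x : Fin m → F | ∀ p ∈ S, MvPolynomial.eval x p = 0}ᶜ}

/-!
Along an affine line `t ↦ x + t • (y - x)` a polynomial either vanishes identically or has
finitely many zeros, so the line is a continuous image of `F` with the cofinite topology, which
is irreducible because `F` is infinite. Hence every set containing the line through any two of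
its points, in particular every flat of the arrangement, is Zariski preconnected. Two
`(m - k)`-subsets of hyperplanes are joined by a chain of exchanges `T ↦ T - i + j`, and the
flats of consecutive subsets meet: both contain the intersection of the `m - k + 1 ≤ m`
hyperplanes of `T + j`, which is nonempty by general position.
-/

open Finset Relation AffineMap

namespace MvPolynomial

variable {F σ : Type*} [Field F]

lemma eval_lineMap (p : MvPolynomial σ F) (x y : σ → F) (t : F) :
    eval (lineMap x y t) p =
      (aeval (fun j => Polynomial.X * Polynomial.C (y j - x j) + Polynomial.C (x j)) p).eval t := by
  rw [← Polynomial.coe_aeval_eq_eval, comp_aeval_apply, ← coe_aeval_eq_eval]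
  refine congrArg (fun f => aeval f p) ?_
  ext j
  simp [lineMap_apply_module']

lemma finite_or_eq_univ_setOf_eval_lineMap_eq_zero (p : MvPolynomial σ F) (x y : σ → F) :
    {t : F | eval (lineMap x y t) p = 0}.Finite ∨
      {t : F | eval (lineMap x y t) p = 0} = Set.univ := by
  simp only [eval_lineMap]
  set g := aeval (fun j => Polynomial.X * Polynomial.C (y j - x j) + Polynomial.C (x j)) p
  rcases eq_or_ne g 0 with hg | hg
  · simp [hg]
  · exact Or.inl (Polynomial.finite_setOfPred_isRoot hg)

end MvPolynomial

lemma lineMap_mem_hypSet {F : Type*} [Field F] {m : ℕ} {a x y : Fin m → F} {b : F}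
    (hx : x ∈ hypSet a b) (hy : y ∈ hypSet a b) (t : F) : lineMap x y t ∈ hypSet a b := by
  change a ⬝ᵥ x = b at hx
  change a ⬝ᵥ y = b at hy
  change a ⬝ᵥ lineMap x y t = b
  rw [lineMap_apply_module', dotProduct_add, dotProduct_smul, dotProduct_sub, hx, hy, sub_self,
    smul_zero, zero_add]

section Zariski

variable {F : Type*} [Field F] {m : ℕ}

local instance : TopologicalSpace (Fin m → F) := zariski F m

lemma zariski_continuous_lineMap (x y : Fin m → F) :
    Continuous fun t : CofiniteTopology F => lineMap x y (CofiniteTopology.of.symm t) := by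
  refine continuous_generateFrom_iff.2 ?_
  rintro _ ⟨S, rfl⟩
  rw [CofiniteTopology.isOpen_iff', Set.preimage_compl, compl_compl, Set.compl_empty_iff]
  by_cases h : ∀ p ∈ S, {t : F | MvPolynomial.eval (lineMap x y t) p = 0} = Set.univ
  · left
    exact Set.eq_univ_of_forall fun t p hp =>
      Set.eq_univ_iff_forall.1 (h p hp) (CofiniteTopology.of.symm t)
  · simp only [not_forall] at h
    obtain ⟨p, hp, hne⟩ := h
    right
    have hZ : (lineMap x y ⁻¹' {z | ∀ p ∈ S, MvPolynomial.eval z p = 0}).Finite :=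
      ((p.finite_or_eq_univ_setOf_eval_lineMap_eq_zero x y).resolve_right hne).subset
        fun t ht => ht p hp
    exact hZ.preimage (f := CofiniteTopology.of.symm) CofiniteTopology.of.symm.injective.injOn

variable [Infinite F]

lemma zariski_isPreconnected_range_lineMap (x y : Fin m → F) :
    IsPreconnected (Set.range (lineMap x y : F → Fin m → F)) := by
  rw [← EquivLike.range_comp _ CofiniteTopology.of.symm]
  exact isPreconnected_range (zariski_continuous_lineMap x y)

lemma zariski_isPreconnected_of_lineMap_mem {s : Set (Fin m → F)}
    (hs : ∀ x ∈ s, ∀ y ∈ s, ∀ t : F, lineMap x y t ∈ s) : IsPreconnected s :=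
  isPreconnected_of_forall_pair fun x hx y hy =>
    ⟨_, Set.range_subset_iff.2 (hs x hx y hy), ⟨0, lineMap_apply_zero x y⟩,
      ⟨1, lineMap_apply_one x y⟩, zariski_isPreconnected_range_lineMap x y⟩

lemma zariski_isPreconnected_biInter_hypSet {ι : Type*} (a : ι → Fin m → F) (b : ι → F)
    (T : Finset ι) : IsPreconnected (⋂ i ∈ T, hypSet (a i) (b i)) :=
  zariski_isPreconnected_of_lineMap_mem fun _ hx _ hy t =>
    Set.mem_iInter₂.2 fun i hi =>
      lineMap_mem_hypSet (Set.mem_iInter₂.1 hx i hi) (Set.mem_iInter₂.1 hy i hi) t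

end Zariski

theorem Finset.reflTransGen_of_exchange {α : Type*} [DecidableEq α] {r : ℕ}
    {R : Finset α → Finset α → Prop}
    (hR : ∀ T : Finset α, #T = r → ∀ i ∈ T, ∀ j ∉ T, R T (insert j (T.erase i)))
    {T T' : Finset α} (hT : #T = r) (hT' : #T' = r) : ReflTransGen R T T' := by
  induction h : #(T \ T') generalizing T with
  | zero =>
    rw [card_eq_zero, sdiff_eq_empty_iff_subset] at h
    rw [eq_of_subset_of_card_le h (hT'.trans hT.symm).le]
  | succ d ih =>
    obtain ⟨i, hi⟩ : (T \ T').Nonempty := card_pos.1 (by omega)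
    obtain ⟨j, hj⟩ : (T' \ T).Nonempty :=
      card_pos.1 (by rw [card_sdiff_eq_card_sdiff_iff.2 (hT'.trans hT.symm)]; omega)
    rw [mem_sdiff] at hi hj
    refine .head (hR T hT i hi.1 j hj.2) (ih ?_ ?_)
    · rw [card_insert_of_notMem (fun h => hj.2 (mem_of_mem_erase h)), card_erase_of_mem hi.1,
        Nat.sub_add_cancel (card_pos.2 ⟨i, hi.1⟩), hT]
    · rw [insert_sdiff_of_mem _ hj.1, erase_sdiff_comm, card_erase_of_mem (mem_sdiff.2 hi), h]
      rfl

theorem IsArrangement.biInter_hypSet_nonempty {F : Type*} [Field F] {m n : ℕ}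
    {a : Fin n → Fin m → F} {b : Fin n → F} (hA : IsArrangement a b) {T : Finset (Fin n)}
    (hT : #T ≤ m) : (⋂ i ∈ T, hypSet (a i) (b i)).Nonempty := by
  obtain rfl | hne := T.eq_empty_or_nonempty
  · simp
  · obtain ⟨A, hAT, hA, -⟩ := hA.2.1 T hne hT
    exact hAT ▸ hA

theorem zariski_connectedness_of_skeleton_general {F : Type*} [Field F] [Infinite F] {m n : ℕ}
    (a : Fin n → Fin m → F) (b : Fin n → F) (hA : IsArrangement a b)
    (k : ℕ) (hk1 : 1 ≤ k) :
    @IsPreconnected (Fin m → F) (zariski F m)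
      (⋃ (T : Finset (Fin n)) (_ : T.card = m - k), ⋂ i ∈ T, hypSet (a i) (b i)) := by
  refine @IsPreconnected.biUnion_of_reflTransGen _ (zariski F m) _ _ (t := {T | #T = m - k})
    (fun T _ => zariski_isPreconnected_biInter_hypSet a b T)
    fun T hT T' hT' => reflTransGen_of_exchange (fun T hT i hi j hj => ⟨?_, hT⟩) hT hT'
  have hcard : #(insert j T) ≤ m := by
    rw [card_insert_of_notMem hj]
    have := card_pos.2 ⟨i, hi⟩
    omega
  exact (hA.biInter_hypSet_nonempty hcard).mono (Set.subset_inter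
    (Set.biInter_subset_biInter_left (coe_subset.2 (subset_insert j T)))
    (Set.biInter_subset_biInter_left (coe_subset.2 (insert_subset_insert j (erase_subset i T)))))

/-- **Theorem (Zariski connectedness of positive dimensional skeletons).** Over an
infinite field `F`, for every `1 ≤ k ≤ m - 1` the skeleton of `k`-dimensional planes of
a hyperplane arrangement in `F^m` (the union of the intersections of all `(m-k)`-element
subfamilies of the hyperplanes) is connected in the Zariski topology: it cannot be
partitioned into two nonempty relatively open subsets. -/
theorem zariski_connectedness_of_skeleton {F : Type*} [Field F] [Infinite F] {m n : ℕ}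
    (a : Fin n → Fin m → F) (b : Fin n → F) (hA : IsArrangement a b)
    (k : ℕ) (hk1 : 1 ≤ k) (hk2 : k ≤ m - 1) :
    @IsPreconnected (Fin m → F) (zariski F m)
      (⋃ (T : Finset (Fin n)) (_ : T.card = m - k), ⋂ i ∈ T, hypSet (a i) (b i)) :=
  zariski_connectedness_of_skeleton_general a b hA k hk1
end

section
/- Let 𝔽 be an ordered field and let H_1, …, H_{m+1} be m + 1 hyperplanes in general position in 𝔽^m cutting out a bounded nonempty polyhedral region Δ (an m-dimensional simplex). For each i let u_i be the outward-pointing normal vector of H_i with respect to Δ (the nonzero normal of H_i such that the linear functional x ↦ u_i · x is larger on the side of H_i not containing Δ). Then for every 1 ≤ i ≤ m + 1 there exist α_j > 0 for j ≠ i such that −u_i = ∑_{j ≠ i} α_j u_j. -/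
open Finset

/-!
The `m` hyperplanes other than the `i`-th meet in a single point, so their normals `u j`
(`j ≠ i`) form a basis and `-u i = ∑ β j • u j` for some `β`. Solving `u j ⬝ᵥ d = -δ j k`
for `j ≠ i` gives `u i ⬝ᵥ d = β k`; if `β k ≤ 0`, every normal is nonpositive on the nonzero
direction `d`, so the ray from a point of the simplex in direction `d` stays inside it,
contradicting boundedness.
-/

open Matrix

theorem Fin.sum_univ_erase_eq_sum_succAbove {M : Type*} [AddCommMonoid M] {n : ℕ}
    (f : Fin (n + 1) → M) (i : Fin (n + 1)) :
    ∑ j ∈ univ.erase i, f j = ∑ k, f (i.succAbove k) := by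
  rw [← compl_singleton, ← Fin.image_succAbove_univ, sum_image Fin.succAbove_right_injective.injOn]

section

variable {F : Type*} [Field F] {m : ℕ}

theorem IsArrangement.eq_zero_of_dotProduct_eq_zero {n : ℕ} {a : Fin n → Fin m → F}
    {b : Fin n → F} (hA : IsArrangement a b) {T : Finset (Fin n)} (hT : T.card = m)
    {d : Fin m → F} (hd : ∀ j ∈ T, a j ⬝ᵥ d = 0) : d = 0 := by
  rcases T.eq_empty_or_nonempty with rfl | hTne
  · obtain rfl : m = 0 := by simpa using hT.symm
    exact Subsingleton.elim _ _
  obtain ⟨A, hAeq, ⟨p, hp⟩, hdim⟩ := hA.2.1 T hTne hT.le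
  have hdir : A.direction = ⊥ := by
    rw [← Submodule.finrank_eq_zero, hdim, hT, Nat.sub_self]
  have hdp : d +ᵥ p ∈ A := by
    rw [hAeq, Set.mem_iInter₂] at hp
    rw [← SetLike.mem_coe, hAeq, Set.mem_iInter₂]
    intro j hj
    change a j ⬝ᵥ (d + p) = b j
    rw [dotProduct_add, hd j hj, zero_add]
    exact hp j hj
  simpa [hdir] using (AffineSubspace.vadd_mem_iff_mem_direction d hp).mp hdp

theorem IsArrangement.isUnit_of_succAbove {u : Fin (m + 1) → Fin m → F} {c : Fin (m + 1) → F}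
    (hA : IsArrangement u c) (i : Fin (m + 1)) :
    IsUnit (Matrix.of fun k => u (i.succAbove k)) := by
  rw [← mulVec_injective_iff_isUnit]
  intro x y hxy
  rw [← sub_eq_zero]
  refine hA.eq_zero_of_dotProduct_eq_zero (T := univ.erase i) (by simp) fun j hj => ?_
  obtain ⟨k, rfl⟩ := Fin.exists_succAbove_eq (ne_of_mem_erase hj)
  rw [dotProduct_sub, sub_eq_zero]
  exact congrFun hxy k

variable [LinearOrder F] [IsStrictOrderedRing F]

theorem isUnboundedSet_of_dotProduct_nonpos {ι : Type*} {a : ι → Fin m → F} {c : ι → F}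
    {x d : Fin m → F} (hx : ∀ j, a j ⬝ᵥ x ≤ c j) (hd0 : d ≠ 0) (hd : ∀ j, a j ⬝ᵥ d ≤ 0) :
    IsUnboundedSet {y | ∀ j, a j ⬝ᵥ y ≤ c j} := by
  refine ⟨x + d, x, fun j => ?_, hx, by simpa using hd0, Or.inl fun t ht j => ?_⟩
  · rw [dotProduct_add]
    linarith [hx j, hd j]
  · rw [add_sub_cancel_left, dotProduct_add, dotProduct_smul, smul_eq_mul]
    linarith [hx j, mul_nonpos_of_nonneg_of_nonpos ht (hd j)]

end

theorem simplex_outward_normals_general {F : Type*} [Field F] [LinearOrder F] [IsStrictOrderedRing F] {m : ℕ}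
    (u : Fin (m + 1) → Fin m → F) (c : Fin (m + 1) → F)
    (hA : IsArrangement u c)
    (hne : ({x : Fin m → F | ∀ i, ∑ j, u i j * x j ≤ c i}).Nonempty)
    (hbd : ¬ IsUnboundedSet {x : Fin m → F | ∀ i, ∑ j, u i j * x j ≤ c i}) :
    ∀ i : Fin (m + 1), ∃ α : Fin (m + 1) → F,
      (∀ j, j ≠ i → 0 < α j) ∧
      -u i = ∑ j ∈ Finset.univ.erase i, α j • u j := by
  intro i
  set U : Matrix (Fin m) (Fin m) F := Matrix.of fun k => u (i.succAbove k)
  have hU : IsUnit U := hA.isUnit_of_succAbove i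
  obtain ⟨β, hβ : β ᵥ* U = -u i⟩ := vecMul_surjective_iff_isUnit.mpr hU (-u i)
  refine ⟨Fin.insertNth i 0 β, fun j hj => ?_, ?_⟩
  · obtain ⟨k, rfl⟩ := Fin.exists_succAbove_eq hj
    rw [Fin.insertNth_apply_succAbove]
    obtain ⟨d, hd⟩ := mulVec_surjective_iff_isUnit.mpr hU (-Pi.single k 1)
    have hdi : u i ⬝ᵥ d = β k := by
      rw [← neg_neg (u i), ← hβ, neg_dotProduct, ← dotProduct_mulVec, hd, dotProduct_neg,
        dotProduct_single, mul_one, neg_neg]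
    by_contra! hβk
    obtain ⟨x, hx⟩ := hne
    refine hbd (isUnboundedSet_of_dotProduct_nonpos (d := d) hx ?_ fun j => ?_)
    · rintro rfl
      simp at hd
    · rcases Fin.eq_self_or_eq_succAbove i j with rfl | ⟨l, rfl⟩
      · rwa [hdi]
      · change (U *ᵥ d) l ≤ 0
        rw [hd, Pi.neg_apply, neg_nonpos, Pi.single_apply]
        split_ifs <;> norm_num
  · rw [Fin.sum_univ_erase_eq_sum_succAbove, ← hβ, vecMul_eq_sum]
    simp only [Fin.insertNth_apply_succAbove]
    rfl

/-- **Outward normals of a simplex.** Let `m + 1` hyperplanes `u i ⬝ x = c i` in general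
position in `F^m` cut out the nonempty bounded polyhedral region (an `m`-dimensional
simplex) `Δ = {x | ∀ i, u i ⬝ x ≤ c i}`, so that each `u i` is the outward-pointing
normal of the corresponding hyperplane with respect to `Δ`.  Then for every `i` the
vector `-u i` is a positive linear combination of the remaining outward normals. -/
theorem simplex_outward_normals {F : Type*} [Field F] [LinearOrder F] [IsStrictOrderedRing F] {m : ℕ}
    (hm : 0 < m) (u : Fin (m + 1) → Fin m → F) (c : Fin (m + 1) → F)
    (hA : IsArrangement u c)
    (hne : ({x : Fin m → F | ∀ i, ∑ j, u i j * x j ≤ c i}).Nonempty)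
    (hbd : ¬ IsUnboundedSet {x : Fin m → F | ∀ i, ∑ j, u i j * x j ≤ c i}) :
    ∀ i : Fin (m + 1), ∃ α : Fin (m + 1) → F,
      (∀ j, j ≠ i → 0 < α j) ∧
      -u i = ∑ j ∈ Finset.univ.erase i, α j • u j :=
  simplex_outward_normals_general u c hA hne hbd
end
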